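/- arXiv:2009.03117 — 6 statements merged into one kernel-verified Lean document; each statement's English description precedes it below -/
import Mathlib

section
/- Let Φ denote the standard normal cumulative distribution function, let x ≥ 0, and let (a_n) be a sequence of nonnegative reals with a_n → x. Then log(1 − Φ(√(2 a_n log n)))/log(n) → −x as n → ∞. -/
/-! For `t ≥ 0` the Gaussian tail satisfies `(2π)^{-1/2} e^{-(t+1)²/2} ≤ 1 - Φ(t) ≤ e^{-t²/2}`:
the lower bound from the density on `(t, t + 1]`, the upper one by Chernoff. Taking logarithms
and dividing by `L`, both bounds equal `-t²/(2L) + O((t + 1)/L)`, and `t/L → 0` as soon as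
`t²/(2L)` stays bounded while `L → ∞`. For `t = √(2 aₙ log n)` and `L = log n`, `t²/(2L) = aₙ`. -/

open MeasureTheory ProbabilityTheory Real Filter Topology

noncomputable section

/-- The standard normal cumulative distribution function `Φ`. -/
def Phi (x : ℝ) : ℝ := ((gaussianReal 0 1) (Set.Iic x)).toReal

lemma one_sub_Phi_eq_measureReal_Ioi (t : ℝ) :
    1 - Phi t = (gaussianReal 0 1).real (Set.Ioi t) := by
  rw [← Set.compl_Iic, probReal_compl_eq_one_sub measurableSet_Iic]
  rfl

lemma one_sub_Phi_le_exp {t : ℝ} (ht : 0 ≤ t) : 1 - Phi t ≤ exp (-t ^ 2 / 2) := by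
  have chernoff := measure_ge_le_exp_mul_mgf (μ := gaussianReal 0 1) (X := id) t ht
    (integrable_exp_mul_gaussianReal t)
  rw [mgf_id_gaussianReal, ← exp_add] at chernoff
  calc 1 - Phi t = (gaussianReal 0 1).real (Set.Ioi t) := one_sub_Phi_eq_measureReal_Ioi t
    _ ≤ (gaussianReal 0 1).real {y | t ≤ id y} := measureReal_mono fun y (hy : t < y) => hy.le
    _ ≤ exp (-t * t + ((0 : ℝ) * t + ((1 : NNReal) : ℝ) * t ^ 2 / 2)) := chernoff
    _ = exp (-t ^ 2 / 2) := by push_cast; ring_nf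

lemma exp_le_one_sub_Phi {t : ℝ} (ht : 0 ≤ t) :
    (√(2 * π))⁻¹ * exp (-(t + 1) ^ 2 / 2) ≤ 1 - Phi t := by
  have density_ge : ∀ y ∈ Set.Ioc t (t + 1),
      (√(2 * π))⁻¹ * exp (-(t + 1) ^ 2 / 2) ≤ gaussianPDFReal 0 1 y := by
    rintro y ⟨hty, hyt⟩
    simp only [gaussianPDFReal, NNReal.coe_one, mul_one, sub_zero]
    gcongr
    nlinarith
  calc (√(2 * π))⁻¹ * exp (-(t + 1) ^ 2 / 2)
      = (√(2 * π))⁻¹ * exp (-(t + 1) ^ 2 / 2) * volume.real (Set.Ioc t (t + 1)) := by simp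
    _ ≤ ∫ y in Set.Ioc t (t + 1), gaussianPDFReal 0 1 y :=
        setIntegral_ge_of_const_le_real measurableSet_Ioc (by simp) density_ge
          (integrable_gaussianPDFReal 0 1).integrableOn
    _ = (gaussianReal 0 1).real (Set.Ioc t (t + 1)) := by
        rw [measureReal_def, gaussianReal_apply_eq_integral 0 one_ne_zero,
          ENNReal.toReal_ofReal
            (setIntegral_nonneg measurableSet_Ioc fun y _ => gaussianPDFReal_nonneg 0 1 y)]
    _ ≤ 1 - Phi t := by
        rw [one_sub_Phi_eq_measureReal_Ioi]
        exact measureReal_mono Set.Ioc_subset_Ioi_self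

lemma log_one_sub_Phi_le {t : ℝ} (ht : 0 ≤ t) : log (1 - Phi t) ≤ -t ^ 2 / 2 :=
  (log_le_iff_le_exp (lt_of_lt_of_le (by positivity) (exp_le_one_sub_Phi ht))).2
    (one_sub_Phi_le_exp ht)

lemma log_one_sub_Phi_ge {t : ℝ} (ht : 0 ≤ t) :
    log (√(2 * π))⁻¹ - (t + 1) ^ 2 / 2 ≤ log (1 - Phi t) := by
  have h := log_le_log (by positivity) (exp_le_one_sub_Phi ht)
  rw [log_mul (by positivity) (exp_ne_zero _), log_exp] at h
  linarith

lemma tendsto_div_zero_of_tendsto_sq_div {ι : Type*} {l : Filter ι} {t L : ι → ℝ} {x : ℝ}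
    (ht : ∀ i, 0 ≤ t i) (hL : Tendsto L l atTop)
    (hx : Tendsto (fun i => t i ^ 2 / (2 * L i)) l (𝓝 x)) :
    Tendsto (fun i => t i / L i) l (𝓝 0) := by
  have hsq : Tendsto (fun i => √(2 * (t i ^ 2 / (2 * L i)) * (L i)⁻¹)) l (𝓝 0) := by
    simpa using ((hx.const_mul 2).mul hL.inv_tendsto_atTop).sqrt
  refine hsq.congr' ?_
  filter_upwards [hL.eventually_gt_atTop 0] with i hLi
  rw [← sqrt_sq (div_nonneg (ht i) hLi.le)]
  congr 1
  field_simp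

theorem tendsto_log_one_sub_Phi_div {ι : Type*} {l : Filter ι} {t L : ι → ℝ} {x : ℝ}
    (ht : ∀ i, 0 ≤ t i) (hL : Tendsto L l atTop)
    (hx : Tendsto (fun i => t i ^ 2 / (2 * L i)) l (𝓝 x)) :
    Tendsto (fun i => log (1 - Phi (t i)) / L i) l (𝓝 (-x)) := by
  have hLinv := hL.inv_tendsto_atTop
  have hLpos := hL.eventually_gt_atTop 0
  have lower_lim :
      Tendsto (fun i => (log (√(2 * π))⁻¹ - (t i + 1) ^ 2 / 2) / L i) l (𝓝 (-x)) := by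
    have h : Tendsto (fun i => log (√(2 * π))⁻¹ * (L i)⁻¹ - t i ^ 2 / (2 * L i) - t i / L i
        - (L i)⁻¹ / 2) l (𝓝 (-x)) := by
      simpa using (((hLinv.const_mul (log (√(2 * π))⁻¹)).sub hx).sub
        (tendsto_div_zero_of_tendsto_sq_div ht hL hx)).sub (hLinv.div_const 2)
    refine h.congr' ?_
    filter_upwards [hLpos] with i hLi
    field_simp
    ring
  refine tendsto_of_tendsto_of_tendsto_of_le_of_le' lower_lim hx.neg ?_ ?_
  · filter_upwards [hLpos] with i hLi
    exact div_le_div_of_nonneg_right (log_one_sub_Phi_ge (ht i)) hLi.le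
  · filter_upwards [hLpos] with i hLi
    rw [div_le_iff₀ hLi]
    calc log (1 - Phi (t i)) ≤ -t i ^ 2 / 2 := log_one_sub_Phi_le (ht i)
      _ = -(t i ^ 2 / (2 * L i)) * L i := by field_simp

theorem statement7_general (x : ℝ) (a : ℕ → ℝ) (ha0 : ∀ n, 0 ≤ a n)
    (ha : Tendsto a atTop (𝓝 x)) :
    Tendsto (fun n : ℕ =>
        Real.log (1 - Phi (Real.sqrt (2 * a n * Real.log n))) / Real.log n)
      atTop (𝓝 (-x)) := by
  refine tendsto_log_one_sub_Phi_div (fun n => sqrt_nonneg _)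
    (tendsto_log_atTop.comp tendsto_natCast_atTop_atTop) (ha.congr' ?_)
  filter_upwards [eventually_ge_atTop 2] with n hn
  have hlog : 0 < log n := log_pos (by exact_mod_cast hn)
  rw [sq_sqrt (by have := ha0 n; positivity)]
  field_simp

/-- Lemma 1.  For `x ≥ 0` and nonnegative `a_n → x`,
`1 − Φ(√(2 a_n log n)) = n^{−x + o(1)}`, i.e. the normalized logarithm tends to `−x`. -/
theorem statement7 (x : ℝ) (hx : 0 ≤ x) (a : ℕ → ℝ) (ha0 : ∀ n, 0 ≤ a n)
    (ha : Tendsto a atTop (𝓝 x)) :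
    Tendsto (fun n : ℕ =>
        Real.log (1 - Phi (Real.sqrt (2 * a n * Real.log n))) / Real.log n)
      atTop (𝓝 (-x)) :=
  statement7_general x a ha0 ha
end
end

section
/- Let z₁, …, z_N be real numbers, not all equal, and let 1 ≤ m ≤ N. Let (Z₁, …, Z_m) be sampled uniformly at random without replacement from {z₁, …, z_N} (i.e. Z_k = z_{σ(k)} for a uniformly random permutation σ of {1,…,N}). Set z̄ = (1/N) Σ_{j≤N} z_j, σ_z² = (1/N) Σ_{j≤N} (z_j − z̄)², z_max = max_j z_j, and Z̄ = (1/m) Σ_{k≤m} Z_k. Then for every τ ≥ 0, P(Z̄ ≥ z̄ + τ) ≤ exp(−m τ² / (2 σ_z² + (2/3)(z_max − z̄) τ)). -/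
/-!
Chernoff's method bounds the number of permutations in the event by
`exp (-t m (z̄ + τ)) * ∑ σ, ∏_{k < m} exp (t z_{σ k})` for every `t ≥ 0`. Transposing a sampled
position with an unsampled one and applying AM-GM shows that the average over `σ` of such a
product of nonnegative weights is at most the `m`-th power of the population mean of the weights
(sampling without replacement is dominated by sampling with replacement). Bernstein's estimate
`exp y ≤ 1 + y + y² / (2 (1 - u / 3))` for `y ≤ u < 3` bounds that mean by
`exp (t z̄ + t² σ_z² / (2 (1 - t c / 3)))` with `c = z_max - z̄`, and `t = τ / (σ_z² + c τ / 3)`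
gives the stated exponent.
-/

open Real Nat Equiv

namespace Real

theorem exp_le_one_add_add_sq_div_two_of_nonpos {y : ℝ} (hy : y ≤ 0) :
    exp y ≤ 1 + y + y ^ 2 / 2 := by
  let g : ℝ → ℝ := fun x => 1 + x + x ^ 2 / 2 - exp x
  have hg : ∀ x, HasDerivAt g (1 + x - exp x) x := fun x => by
    have hq : HasDerivAt (fun x : ℝ => 1 + x + x ^ 2 / 2) (1 + x) x :=
      (((hasDerivAt_id x).const_add 1).add ((hasDerivAt_pow 2 x).div_const 2)).congr_deriv
        (by ring)
    exact hq.sub (hasDerivAt_exp x)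
  have hanti : Antitone g := antitone_of_deriv_nonpos (fun x => (hg x).differentiableAt)
    fun x => by rw [(hg x).deriv]; linarith [add_one_le_exp x]
  simpa [g] using hanti hy

theorem exp_le_one_add_add_sq_div_of_nonneg_of_lt_three {y : ℝ} (hy0 : 0 ≤ y) (hy3 : y < 3) :
    exp y ≤ 1 + y + y ^ 2 / (2 * (1 - y / 3)) := by
  have hr : y / 3 < 1 := by linarith
  have hexp := NormedSpace.expSeries_div_hasSum_exp (𝔸 := ℝ) y
  rw [← exp_eq_exp_ℝ, ← hasSum_nat_add_iff' 2] at hexp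
  -- `(n + 2)! ≥ 2 * 3 ^ n` dominates the tail by a geometric series of ratio `y / 3`
  have hgeom := (hasSum_geometric_of_lt_one (by positivity) hr).mul_left (y ^ 2 / 2)
  have hsum : y ^ 2 / 2 * (1 - y / 3)⁻¹ = y ^ 2 / (2 * (1 - y / 3)) := by
    rw [div_mul_eq_div_div, ← div_eq_mul_inv]
  have htail := hasSum_le (fun n => ?_) hexp hgeom
  · simp only [Finset.sum_range_succ] at htail
    norm_num at htail
    linarith [hsum]
  calc y ^ (n + 2) / (n + 2)! ≤ y ^ (n + 2) / (2 ! * 3 ^ n) := by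
        gcongr
        rw [add_comm n 2]
        exact_mod_cast factorial_mul_pow_le_factorial
    _ = y ^ 2 / 2 * (y / 3) ^ n := by simp [pow_add, div_pow]; ring

theorem exp_le_one_add_add_sq_div_of_le {u y : ℝ} (hu0 : 0 ≤ u) (hu3 : u < 3) (hy : y ≤ u) :
    exp y ≤ 1 + y + y ^ 2 / (2 * (1 - u / 3)) := by
  rcases le_or_gt y 0 with hy0 | hy0
  · calc exp y ≤ 1 + y + y ^ 2 / 2 := exp_le_one_add_add_sq_div_two_of_nonpos hy0
      _ ≤ _ := by gcongr <;> linarith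
  · calc exp y ≤ 1 + y + y ^ 2 / (2 * (1 - y / 3)) :=
          exp_le_one_add_add_sq_div_of_nonneg_of_lt_three hy0.le (hy.trans_lt hu3)
      _ ≤ _ := by gcongr; linarith

end Real

section Permutations

variable {ι : Type*} [Fintype ι] [DecidableEq ι]

theorem sum_perm_prod_mul_apply_eq {R : Type*} [CommSemiring R] {s : Finset ι} {i j : ι}
    (hi : i ∉ s) (hj : j ∉ s) (g f : ι → R) :
    ∑ σ : Perm ι, (∏ k ∈ s, g (σ k)) * f (σ i) = ∑ σ : Perm ι, (∏ k ∈ s, g (σ k)) * f (σ j) := by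
  rw [← Equiv.sum_comp (Equiv.mulRight (swap i j))]
  refine Finset.sum_congr rfl fun σ _ => ?_
  have hs : ∀ k ∈ s, g ((σ * swap i j) k) = g (σ k) := fun k hk => by
    rw [Perm.mul_apply, swap_apply_of_ne_of_ne (ne_of_mem_of_not_mem hk hi)
      (ne_of_mem_of_not_mem hk hj)]
  change (∏ k ∈ s, g ((σ * swap i j) k)) * f ((σ * swap i j) i) = _
  rw [Finset.prod_congr rfl hs, Perm.mul_apply, swap_apply_left]

theorem sum_perm_prod_mul_apply_le {s : Finset ι} {M : ι} (hM : M ∉ s) (i : ι) {a : ι → ℝ}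
    (ha : 0 ≤ a) :
    ∑ σ : Perm ι, (∏ k ∈ s, a (σ k)) * a (σ M) ≤ ∑ σ : Perm ι, (∏ k ∈ s, a (σ k)) * a (σ i) := by
  by_cases hi : i ∉ s
  · exact (sum_perm_prod_mul_apply_eq hM hi a a).le
  rw [not_not] at hi
  have hit : i ∉ s.erase i := s.notMem_erase i
  have hMt : M ∉ s.erase i := fun h => hM (Finset.mem_of_mem_erase h)
  simp_rw [← Finset.mul_prod_erase s _ hi]
  -- AM-GM on `a (σ i) * a (σ M)`, then the swap of `i` and `M` equates the two squares
  calc ∑ σ : Perm ι, a (σ i) * (∏ k ∈ s.erase i, a (σ k)) * a (σ M)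
      ≤ ∑ σ : Perm ι, (∏ k ∈ s.erase i, a (σ k)) * ((a (σ i) ^ 2 + a (σ M) ^ 2) / 2) := by
        refine Finset.sum_le_sum fun σ _ => ?_
        have hQ : 0 ≤ ∏ k ∈ s.erase i, a (σ k) := Finset.prod_nonneg fun k _ => ha _
        nlinarith [mul_nonneg hQ (sq_nonneg (a (σ i) - a (σ M)))]
    _ = ∑ σ : Perm ι, (∏ k ∈ s.erase i, a (σ k)) * a (σ i) ^ 2 := by
        simp_rw [mul_div_assoc', mul_add, add_div, Finset.sum_add_distrib]
        rw [← Finset.sum_div, ← Finset.sum_div,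
          sum_perm_prod_mul_apply_eq hMt hit a (fun x => a x ^ 2)]
        ring
    _ = ∑ σ : Perm ι, a (σ i) * (∏ k ∈ s.erase i, a (σ k)) * a (σ i) := by
        simp_rw [sq]; congr! 1; ring

theorem card_mul_sum_perm_prod_mul_apply_le {s : Finset ι} {M : ι} (hM : M ∉ s) {a : ι → ℝ}
    (ha : 0 ≤ a) :
    Fintype.card ι * ∑ σ : Perm ι, (∏ k ∈ s, a (σ k)) * a (σ M)
      ≤ (∑ j, a j) * ∑ σ : Perm ι, ∏ k ∈ s, a (σ k) :=
  calc Fintype.card ι * ∑ σ : Perm ι, (∏ k ∈ s, a (σ k)) * a (σ M)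
      = ∑ _i : ι, ∑ σ : Perm ι, (∏ k ∈ s, a (σ k)) * a (σ M) := by simp
    _ ≤ ∑ i : ι, ∑ σ : Perm ι, (∏ k ∈ s, a (σ k)) * a (σ i) :=
        Finset.sum_le_sum fun i _ => sum_perm_prod_mul_apply_le hM i ha
    _ = ∑ σ : Perm ι, (∏ k ∈ s, a (σ k)) * ∑ i, a (σ i) := by
        rw [Finset.sum_comm]; simp_rw [Finset.mul_sum]
    _ = (∑ j, a j) * ∑ σ : Perm ι, ∏ k ∈ s, a (σ k) := by
        simp_rw [Equiv.sum_comp]; rw [← Finset.sum_mul, mul_comm]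

end Permutations

theorem sum_perm_prod_lt_le_factorial_mul_pow {n m : ℕ} (hmn : m ≤ n) {a : Fin n → ℝ}
    (ha : 0 ≤ a) :
    ∑ σ : Perm (Fin n), ∏ k ∈ Finset.univ.filter (fun k : Fin n => (k : ℕ) < m), a (σ k)
      ≤ n ! * ((∑ j, a j) / n) ^ m := by
  induction m with
  | zero => simp [Fintype.card_perm]
  | succ m ih =>
    have hm : m < n := hmn
    have hM : (⟨m, hm⟩ : Fin n) ∉ Finset.univ.filter (fun k : Fin n => (k : ℕ) < m) := by simp
    have hinsert : Finset.univ.filter (fun k : Fin n => (k : ℕ) < m + 1)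
        = insert ⟨m, hm⟩ (Finset.univ.filter fun k : Fin n => (k : ℕ) < m) := by
      ext k; simp [Fin.ext_iff]; omega
    have hn : (0 : ℝ) < n := by exact_mod_cast (Nat.zero_le m).trans_lt hm
    have hstep := card_mul_sum_perm_prod_mul_apply_le hM ha
    rw [Fintype.card_fin] at hstep
    simp_rw [hinsert, Finset.prod_insert hM, mul_comm (a _)]
    calc _ ≤ (∑ j, a j) / n * ∑ σ : Perm (Fin n),
            ∏ k ∈ Finset.univ.filter (fun k : Fin n => (k : ℕ) < m), a (σ k) := by
          rw [div_mul_eq_mul_div, le_div_iff₀ hn]; linarith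
      _ ≤ (∑ j, a j) / n * (n ! * ((∑ j, a j) / n) ^ m) := by
          gcongr
          · exact div_nonneg (Finset.sum_nonneg fun j _ => ha j) hn.le
          · exact ih hm.le
      _ = n ! * ((∑ j, a j) / n) ^ (m + 1) := by ring

theorem Finset.card_filter_le_sum_exp {α : Type*} (s : Finset α) (f : α → ℝ) (a : ℝ)
    [DecidablePred fun x => a ≤ f x] {t : ℝ} (ht : 0 ≤ t) :
    ((s.filter fun x => a ≤ f x).card : ℝ) ≤ ∑ x ∈ s, exp (t * (f x - a)) :=
  calc ((s.filter fun x => a ≤ f x).card : ℝ) = ∑ x ∈ s.filter fun x => a ≤ f x, 1 := by simp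
    _ ≤ ∑ x ∈ s.filter fun x => a ≤ f x, exp (t * (f x - a)) :=
        Finset.sum_le_sum fun x hx =>
          one_le_exp (mul_nonneg ht (sub_nonneg.2 (Finset.mem_filter.1 hx).2))
    _ ≤ ∑ x ∈ s, exp (t * (f x - a)) :=
        Finset.sum_le_sum_of_subset_of_nonneg (Finset.filter_subset _ _)
          fun _ _ _ => (exp_pos _).le

theorem card_filter_perm_div_factorial_le_one {N : ℕ} (p : Perm (Fin N) → Prop)
    [DecidablePred p] : ((Finset.univ.filter p).card : ℝ) / N ! ≤ 1 := by
  rw [div_le_one (by positivity)]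
  exact_mod_cast (Finset.card_filter_le _ p).trans_eq (by simp [Fintype.card_perm])

theorem card_filter_sample_mean_ge_div_factorial_le {N m : ℕ} (hm : 0 < m) (hmN : m ≤ N)
    (z : Fin N → ℝ) (a : ℝ) {t : ℝ} (ht : 0 ≤ t) :
    ((Finset.univ.filter fun σ : Perm (Fin N) =>
        (∑ k ∈ Finset.univ.filter fun k : Fin N => (k : ℕ) < m, z (σ k)) / m ≥ a).card : ℝ)
          / N !
      ≤ exp (-(t * m * a)) * ((∑ j, exp (t * z j)) / N) ^ m := by
  have hm' : (m : ℝ) ≠ 0 := by positivity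
  calc _ ≤ (∑ σ : Perm (Fin N), exp (t * m *
          ((∑ k ∈ Finset.univ.filter fun k : Fin N => (k : ℕ) < m, z (σ k)) / m - a))) / N ! := by
        gcongr; exact Finset.card_filter_le_sum_exp _ _ _ (by positivity)
    _ = exp (-(t * m * a)) * (∑ σ : Perm (Fin N),
          ∏ k ∈ Finset.univ.filter fun k : Fin N => (k : ℕ) < m, exp (t * z (σ k))) / N ! := by
        rw [Finset.mul_sum]; congr 1; refine Finset.sum_congr rfl fun σ _ => ?_
        rw [← exp_sum, ← exp_add, ← Finset.mul_sum]; congr 1; field_simp; ring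
    _ ≤ exp (-(t * m * a)) * (N ! * ((∑ j, exp (t * z j)) / N) ^ m) / N ! := by
        gcongr; exact sum_perm_prod_lt_le_factorial_mul_pow hmN (a := fun j => exp (t * z j))
          fun j => (exp_pos _).le
    _ = exp (-(t * m * a)) * ((∑ j, exp (t * z j)) / N) ^ m := by field_simp

theorem sum_exp_mul_le {ι : Type*} (s : Finset ι) {w : ι → ℝ} (hw : ∑ i ∈ s, w i = 0)
    {c t : ℝ} (ht : 0 ≤ t) (hc : 0 ≤ c) (hwc : ∀ i ∈ s, w i ≤ c) (htc : t * c < 3) :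
    ∑ i ∈ s, exp (t * w i) ≤ s.card + t ^ 2 / (2 * (1 - t * c / 3)) * ∑ i ∈ s, w i ^ 2 :=
  calc ∑ i ∈ s, exp (t * w i)
      ≤ ∑ i ∈ s, (1 + t * w i + (t * w i) ^ 2 / (2 * (1 - t * c / 3))) :=
        Finset.sum_le_sum fun i hi => exp_le_one_add_add_sq_div_of_le (mul_nonneg ht hc) htc
          (mul_le_mul_of_nonneg_left (hwc i hi) ht)
    _ = s.card + t ^ 2 / (2 * (1 - t * c / 3)) * ∑ i ∈ s, w i ^ 2 := by
        rw [Finset.sum_add_distrib, Finset.sum_add_distrib, ← Finset.mul_sum, hw, Finset.mul_sum]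
        simp [mul_pow, mul_div_right_comm]

theorem mean_exp_mul_le {ι : Type*} [Fintype ι] [Nonempty ι] (z : ι → ℝ) {c t : ℝ}
    (ht : 0 ≤ t) (hc : 0 ≤ c) (hzc : ∀ i, z i - (∑ j, z j) / Fintype.card ι ≤ c)
    (htc : t * c < 3) :
    (∑ i, exp (t * z i)) / Fintype.card ι
      ≤ exp (t * ((∑ j, z j) / Fintype.card ι) + t ^ 2 / (2 * (1 - t * c / 3)) *
          ((∑ i, (z i - (∑ j, z j) / Fintype.card ι) ^ 2) / Fintype.card ι)) := by
  set n : ℝ := (Fintype.card ι : ℝ)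
  set μ := (∑ j, z j) / n
  set K := t ^ 2 / (2 * (1 - t * c / 3))
  have hn : 0 < n := by positivity
  have hw : ∑ i, (z i - μ) = 0 := by simp [Finset.sum_sub_distrib, μ, n, mul_div_cancel₀ _ hn.ne']
  have hsum := sum_exp_mul_le Finset.univ hw ht hc (fun i _ => hzc i) htc
  calc (∑ i, exp (t * z i)) / n = exp (t * μ) * ((∑ i, exp (t * (z i - μ))) / n) := by
        rw [mul_div_assoc', Finset.mul_sum]; congr 1
        refine Finset.sum_congr rfl fun i _ => ?_
        rw [← exp_add]; ring_nf
    _ ≤ exp (t * μ) * (1 + K * ((∑ i, (z i - μ) ^ 2) / n)) := by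
        gcongr
        rw [div_le_iff₀ hn, add_mul, one_mul, mul_assoc, div_mul_cancel₀ _ hn.ne']
        simpa only [Finset.card_univ] using hsum
    _ ≤ exp (t * μ) * exp (K * ((∑ i, (z i - μ) ^ 2) / n)) := by
        gcongr; linarith [add_one_le_exp (K * ((∑ i, (z i - μ) ^ 2) / n))]
    _ = _ := by rw [← exp_add]

theorem mean_le_ciSup {ι : Type*} [Fintype ι] [Nonempty ι] (z : ι → ℝ) :
    (∑ j, z j) / Fintype.card ι ≤ ⨆ j, z j := by
  obtain ⟨j, -, hj⟩ := Finset.exists_le_of_sum_le Finset.univ_nonempty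
    (f := fun _ => (∑ j, z j) / Fintype.card ι) (g := z) (by simp [mul_div_cancel₀])
  exact hj.trans (le_ciSup (Set.finite_range z).bddAbove j)

theorem ciSup_eq_of_sum_sub_sq_eq_zero {ι : Type*} [Fintype ι] [Nonempty ι] {z : ι → ℝ} {a : ℝ}
    (h : ∑ j, (z j - a) ^ 2 = 0) : ⨆ j, z j = a := by
  have hz : ∀ j, z j = a := fun j => by
    have := (Finset.sum_eq_zero_iff_of_nonneg fun j _ => sq_nonneg (z j - a)).1 h j
      (Finset.mem_univ j)
    rwa [sq_eq_zero_iff, sub_eq_zero] at this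
  simp [hz]

theorem statement8_general (N m : ℕ) (hmN : m ≤ N) (z : Fin N → ℝ) (τ : ℝ) (hτ : 0 ≤ τ) :
    ((Finset.univ.filter fun σ : Equiv.Perm (Fin N) =>
        (∑ k ∈ Finset.univ.filter fun k : Fin N => (k : ℕ) < m, z (σ k)) / m
          ≥ (∑ j, z j) / N + τ).card : ℝ) / N.factorial
      ≤ Real.exp (-(m * τ ^ 2) /
          (2 * ((∑ j, (z j - (∑ j', z j') / N) ^ 2) / N) +
            2 / 3 * ((⨆ j, z j) - (∑ j', z j') / N) * τ)) := by
  set zbar := (∑ j', z j') / N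
  set v := (∑ j, (z j - zbar) ^ 2) / N
  set c := (⨆ j, z j) - zbar
  have hprob := card_filter_perm_div_factorial_le_one fun σ : Perm (Fin N) =>
    (∑ k ∈ Finset.univ.filter fun k : Fin N => (k : ℕ) < m, z (σ k)) / m ≥ zbar + τ
  rcases m.eq_zero_or_pos with rfl | hm
  · simpa using hprob
  have : Nonempty (Fin N) := ⟨⟨0, hm.trans_le hmN⟩⟩
  have hN : (N : ℝ) ≠ 0 := by exact_mod_cast (hm.trans_le hmN).ne'
  have hc0 : 0 ≤ c := sub_nonneg.2 (by simpa using mean_le_ciSup z)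
  have hzc : ∀ i, z i - zbar ≤ c := fun i =>
    sub_le_sub_right (le_ciSup (Set.finite_range z).bddAbove i) zbar
  rcases (show 0 ≤ v by positivity).eq_or_lt with hv0 | hv0
  · have hc : c = 0 := sub_eq_zero.2 <| ciSup_eq_of_sum_sub_sq_eq_zero <|
      (div_eq_zero_iff.1 hv0.symm).resolve_right hN
    simpa [← hv0, hc] using hprob
  rcases hτ.eq_or_lt with rfl | hτ
  · simpa using hprob
  -- the Chernoff parameter `t` minimising the resulting exponent
  set D := v + c * τ / 3
  have hD : 0 < D := by positivity
  set t := τ / D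
  have hK : 1 - t * c / 3 = v / D := by simp only [t, D]; field_simp; ring
  have htc : t * c < 3 := by linarith [show 0 < v / D by positivity]
  calc _ ≤ exp (-(t * m * (zbar + τ))) * ((∑ j, exp (t * z j)) / N) ^ m :=
        card_filter_sample_mean_ge_div_factorial_le hm hmN z _ (by positivity)
    _ ≤ exp (-(t * m * (zbar + τ))) * exp (t * zbar + t ^ 2 / (2 * (1 - t * c / 3)) * v) ^ m := by
        gcongr
        simpa only [Fintype.card_fin] using mean_exp_mul_le z (by positivity) hc0
          (by simpa only [Fintype.card_fin] using hzc) htc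
    _ = _ := by
        rw [hK, ← exp_nat_mul, ← exp_add]; congr 1; simp only [t, D]; field_simp; ring

/-- Lemma 3: Bernstein bound for sampling without replacement.
If `(Z₁, …, Z_m)` are sampled uniformly without replacement from `{z₁, …, z_N}`
(realized as `Z_k = z_{σ(k)}` for a uniformly random permutation `σ`), then for all
`τ ≥ 0`, `P(Z̄ ≥ z̄ + τ) ≤ exp(−m τ²/(2 σ_z² + (2/3)(z_max − z̄) τ))`. -/
theorem statement8 (N m : ℕ) (hm : 1 ≤ m) (hmN : m ≤ N) (z : Fin N → ℝ)
    (hne : ∃ j k, z j ≠ z k) (τ : ℝ) (hτ : 0 ≤ τ) :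
    ((Finset.univ.filter fun σ : Equiv.Perm (Fin N) =>
        (∑ k ∈ Finset.univ.filter fun k : Fin N => (k : ℕ) < m, z (σ k)) / m
          ≥ (∑ j, z j) / N + τ).card : ℝ) / N.factorial
      ≤ Real.exp (-(m * τ ^ 2) /
          (2 * ((∑ j, (z j - (∑ j', z j') / N) ^ 2) / N) +
            2 / 3 * ((⨆ j, z j) - (∑ j', z j') / N) * τ)) :=
  statement8_general N m hmN z τ hτ
end

section
/- Let n, s be positive integers with 2s ≤ n, and let S and S' be independent random subsets of {1, …, n}, each uniformly distributed over the s-element subsets. Then for every c ≥ 0, E[exp(c · |S ∩ S'|)] ≤ (1 − s/(n−s) + (s/(n−s)) e^c)^s. -/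
/-!
Write `e^c = 1 + x` with `x ≥ 0` and `p = s/(n-s)`. Expanding `(1+x)^|S ∩ S'|` as the sum of
`x^|T|` over `T ⊆ S ∩ S'` and exchanging the sums over `S'` and `T`, the sum over `S'` becomes
`∑_{T ⊆ S} N(T) x^|T|`, where `N(T) ≤ C(n-|T|, s-|T|)` counts the `s`-sets containing `T`.
Since `C(n-j-1, s-j-1) / C(n-j, s-j) = (s-j)/(n-j) ≤ p`, we get `N(T) ≤ C(n,s) p^|T|`, and
`∑_{T ⊆ S} (p x)^|T| = (1 + p x)^s`.
-/

open Real Finset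

theorem Nat.cast_choose_sub_le_mul_pow {n s j : ℕ} (hsn : s < n) (hj : j ≤ s) :
    ((n - j).choose (s - j) : ℝ) ≤ n.choose s * (s / (n - s : ℝ)) ^ j := by
  induction j with
  | zero => simp
  | succ j ih =>
    have hjs : (j : ℝ) < s := by exact_mod_cast hj
    have hsn' : (s : ℝ) < n := by exact_mod_cast hsn
    have hpascal := congrArg (Nat.cast : ℕ → ℝ)
      (Nat.add_one_mul_choose_eq (n - (j + 1)) (s - (j + 1)))
    rw [show n - (j + 1) + 1 = n - j by omega, show s - (j + 1) + 1 = s - j by omega] at hpascal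
    push_cast [Nat.cast_sub (by omega : j ≤ n), Nat.cast_sub (by omega : j ≤ s)] at hpascal
    have hratio : ((s : ℝ) - j) / (n - j) ≤ s / (n - s) := by
      rw [div_le_div_iff₀ (by linarith) (by linarith)]
      nlinarith
    calc ((n - (j + 1)).choose (s - (j + 1)) : ℝ)
        = (n - j).choose (s - j) * ((s - j) / (n - j)) := by
          field_simp [show (n : ℝ) - j ≠ 0 by linarith]; linarith
      _ ≤ (n.choose s * (s / (n - s : ℝ)) ^ j) * (s / (n - s)) :=
          mul_le_mul (ih (by omega)) hratio (div_nonneg (by linarith) (by linarith))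
            (by positivity)
      _ = n.choose s * (s / (n - s : ℝ)) ^ (j + 1) := by ring

section
variable {α : Type*} [Fintype α] [DecidableEq α]

theorem Finset.card_filter_superset_powersetCard_le (s : ℕ) (T : Finset α) :
    #{S ∈ powersetCard s (univ : Finset α) | T ⊆ S} ≤ (Fintype.card α - #T).choose (s - #T) := by
  calc #{S ∈ powersetCard s (univ : Finset α) | T ⊆ S}
      ≤ #(powersetCard (s - #T) Tᶜ) := by
        refine card_le_card_of_injOn (· \ T) (fun S hS => ?_) (fun S hS S' hS' hSS' => ?_)
        · rw [mem_coe, mem_filter, mem_powersetCard] at hS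
          rw [mem_coe, mem_powersetCard, card_sdiff_of_subset hS.2, hS.1.2]
          exact ⟨fun x hx => mem_compl.2 (mem_sdiff.1 hx).2, rfl⟩
        · rw [mem_coe, mem_filter] at hS hS'
          rw [← sdiff_union_of_subset hS.2, ← sdiff_union_of_subset hS'.2]
          exact congrArg (· ∪ T) hSS'
    _ = (Fintype.card α - #T).choose (s - #T) := by rw [card_powersetCard, card_compl]

theorem Finset.sum_powersetCard_pow_card_inter_eq (s : ℕ) (S : Finset α) (x : ℝ) :
    ∑ S' ∈ powersetCard s (univ : Finset α), (1 + x) ^ #(S ∩ S')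
      = ∑ T ∈ S.powerset, #{S' ∈ powersetCard s (univ : Finset α) | T ⊆ S'} * x ^ #T := by
  calc ∑ S' ∈ powersetCard s (univ : Finset α), (1 + x) ^ #(S ∩ S')
      = ∑ S' ∈ powersetCard s (univ : Finset α), ∑ T ∈ (S ∩ S').powerset, x ^ #T := by
        refine sum_congr rfl fun S' _ => ?_
        rw [add_comm, ← sum_pow_mul_eq_add_pow]
        simp only [one_pow, mul_one]
    _ = ∑ T ∈ S.powerset, ∑ S' ∈ {S' ∈ powersetCard s (univ : Finset α) | T ⊆ S'}, x ^ #T :=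
        sum_comm' fun S' T => by simp only [mem_powerset, subset_inter_iff, mem_filter]; tauto
    _ = _ := by simp only [sum_const, nsmul_eq_mul]

theorem Finset.sum_powersetCard_pow_card_inter_le {s : ℕ} (hs : s < Fintype.card α) {x : ℝ}
    (hx : 0 ≤ x) {S : Finset α} (hS : #S = s) :
    ∑ S' ∈ powersetCard s (univ : Finset α), (1 + x) ^ #(S ∩ S')
      ≤ (Fintype.card α).choose s * (1 + s / (Fintype.card α - s : ℝ) * x) ^ s := by
  rw [sum_powersetCard_pow_card_inter_eq]
  calc ∑ T ∈ S.powerset, (#{S' ∈ powersetCard s (univ : Finset α) | T ⊆ S'} : ℝ) * x ^ #T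
      ≤ ∑ T ∈ S.powerset, (Fintype.card α).choose s * (s / (Fintype.card α - s : ℝ) * x) ^ #T := by
        refine sum_le_sum fun T hT => ?_
        have hTs : #T ≤ s := hS ▸ card_le_card (mem_powerset.1 hT)
        rw [mul_pow, ← mul_assoc]
        gcongr
        exact (Nat.cast_le.2 (card_filter_superset_powersetCard_le s T)).trans
          (Nat.cast_choose_sub_le_mul_pow hs hTs)
    _ = _ := by
        rw [← mul_sum, ← hS, add_comm, ← sum_pow_mul_eq_add_pow]
        simp

end

/-- hypergeometric mgf bound.  For independent uniformly random
`s`-element subsets `S, S'` of `{1,…,n}` with `2s ≤ n` and `c ≥ 0`,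
`E[exp(c |S ∩ S'|)] ≤ (1 − s/(n−s) + (s/(n−s)) e^c)^s`. -/
theorem statement13 (n s : ℕ) (hs : 0 < s) (h2s : 2 * s ≤ n) (c : ℝ) (hc : 0 ≤ c) :
    (∑ S ∈ Finset.powersetCard s (Finset.univ : Finset (Fin n)),
        ∑ S' ∈ Finset.powersetCard s (Finset.univ : Finset (Fin n)),
          Real.exp (c * ((S ∩ S').card : ℝ))) / ((n.choose s : ℝ)) ^ 2
      ≤ (1 - (s : ℝ) / ((n : ℝ) - s) + (s : ℝ) / ((n : ℝ) - s) * Real.exp c) ^ s := by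
  have hsn : s < n := by omega
  have hexp (k : ℕ) : exp (c * k) = (1 + (exp c - 1)) ^ k := by
    rw [add_sub_cancel, ← exp_nat_mul, mul_comm]
  have hinner : ∀ S ∈ powersetCard s (univ : Finset (Fin n)),
      ∑ S' ∈ powersetCard s (univ : Finset (Fin n)), exp (c * #(S ∩ S'))
        ≤ n.choose s * (1 + s / (n - s : ℝ) * (exp c - 1)) ^ s := fun S hS => by
    simp_rw [hexp]
    simpa using sum_powersetCard_pow_card_inter_le (by simpa using hsn)
      (sub_nonneg.2 (one_le_exp hc)) (mem_powersetCard.1 hS).2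
  rw [div_le_iff₀ (by exact_mod_cast pow_pos (Nat.choose_pos hsn.le) 2)]
  calc _ ≤ ∑ S ∈ powersetCard s (univ : Finset (Fin n)),
          n.choose s * (1 + s / (n - s : ℝ) * (exp c - 1)) ^ s := sum_le_sum hinner
    _ = _ := by
        rw [sum_const, card_powersetCard, card_univ, Fintype.card_fin, nsmul_eq_mul]
        ring
end

section
/- Let L be a nonnegative integrable random variable with E[L] = 1, let Ω be any measurable event, and set L̃ = L · 1_Ω. If E[L̃²] < ∞, then E[|L − 1|] ≤ √(E[L̃²] − 2 E[L̃] + 1) + 1 − E[L̃]. -/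
/-!
Since `L̃ ≤ L`, the triangle inequality through `L̃` gives `|L - 1| ≤ |L̃ - 1| + (L - L̃)`.
Integrating and using `E[L] = 1` leaves `E|L̃ - 1| + 1 - E[L̃]`, and
`E|L̃ - 1| ≤ √E[(L̃ - 1)²]` because the variance of `|L̃ - 1|` is nonnegative.
-/

open MeasureTheory ProbabilityTheory

section

variable {Ω : Type*} [MeasurableSpace Ω] {μ : Measure Ω}

theorem integral_abs_le_sqrt_integral_sq [IsProbabilityMeasure μ] {X : Ω → ℝ}
    (hX : MemLp X 2 μ) : ∫ ω, |X ω| ∂μ ≤ Real.sqrt (∫ ω, X ω ^ 2 ∂μ) := by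
  have hvar := variance_eq_sub hX.abs
  simp only [Pi.pow_apply, Pi.abs_apply, sq_abs] at hvar
  refine Real.le_sqrt_of_sq_le ?_
  linarith [variance_nonneg |X| μ]

theorem integral_sub_const_sq [IsProbabilityMeasure μ] {X : Ω → ℝ} (hX : MemLp X 2 μ)
    (c : ℝ) : ∫ ω, (X ω - c) ^ 2 ∂μ = ∫ ω, X ω ^ 2 ∂μ - 2 * c * ∫ ω, X ω ∂μ + c ^ 2 := by
  have hX1 : Integrable X μ := hX.integrable one_le_two
  have hX2 : Integrable (fun ω => X ω ^ 2) μ := hX.integrable_sq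
  have hlin : Integrable (fun ω => X ω ^ 2 - 2 * c * X ω) μ := hX2.sub (hX1.const_mul _)
  have hexp : ∀ ω, (X ω - c) ^ 2 = X ω ^ 2 - 2 * c * X ω + c ^ 2 := fun ω => by ring
  simp_rw [hexp]
  rw [integral_add hlin (integrable_const _), integral_sub hX2 (hX1.const_mul _),
    integral_const_mul, integral_const, probReal_univ, one_smul]

theorem integral_abs_sub_const_le_of_ae_le [IsFiniteMeasure μ] {L g : Ω → ℝ}
    (hL : Integrable L μ) (hg : Integrable g μ) (hgL : g ≤ᵐ[μ] L) (c : ℝ) :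
    ∫ ω, |L ω - c| ∂μ ≤ ∫ ω, |g ω - c| ∂μ + (∫ ω, L ω ∂μ - ∫ ω, g ω ∂μ) := by
  have hgc : Integrable (fun ω => |g ω - c|) μ := (hg.sub (integrable_const c)).abs
  have hLg : Integrable (fun ω => L ω - g ω) μ := hL.sub hg
  rw [← integral_sub hL hg, ← integral_add hgc hLg]
  refine integral_mono_ae (hL.sub (integrable_const c)).abs (hgc.add hLg) ?_
  filter_upwards [hgL] with ω hω
  calc |L ω - c| ≤ |L ω - g ω| + |g ω - c| := abs_sub_le _ _ _
    _ = |g ω - c| + (L ω - g ω) := by rw [abs_of_nonneg (sub_nonneg.2 hω), add_comm]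

end

theorem statement14_general {Ω : Type*} [MeasurableSpace Ω] (μ : Measure Ω)
    [IsProbabilityMeasure μ]
    (L : Ω → ℝ) (hL : Integrable L μ) (hLnn : ∀ ω, 0 ≤ L ω)
    (hL1 : ∫ ω, L ω ∂μ = 1)
    (A : Set Ω)
    (hL2 : Integrable (fun ω => (A.indicator L ω) ^ 2) μ) :
    ∫ ω, |L ω - 1| ∂μ ≤
      Real.sqrt ((∫ ω, (A.indicator L ω) ^ 2 ∂μ) - 2 * (∫ ω, A.indicator L ω ∂μ) + 1)
        + 1 - ∫ ω, A.indicator L ω ∂μ := by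
  set g := A.indicator L
  have hg_nonneg : ∀ ω, 0 ≤ g ω := Set.indicator_nonneg fun ω _ => hLnn ω
  -- `g = √(g²)` inherits the measurability of the integrable `g²`.
  have hg_meas : AEStronglyMeasurable g μ := by
    refine (hL2.aemeasurable.sqrt.congr (Filter.Eventually.of_forall fun ω => ?_))
      |>.aestronglyMeasurable
    exact Real.sqrt_sq (hg_nonneg ω)
  have hg : MemLp g 2 μ := (memLp_two_iff_integrable_sq hg_meas).2 hL2
  have hgL : g ≤ᵐ[μ] L := Filter.Eventually.of_forall (Set.indicator_le_self' fun ω _ => hLnn ω)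
  have hsq := integral_sub_const_sq hg 1
  rw [mul_one, one_pow] at hsq
  calc ∫ ω, |L ω - 1| ∂μ ≤ ∫ ω, |g ω - 1| ∂μ + (∫ ω, L ω ∂μ - ∫ ω, g ω ∂μ) :=
        integral_abs_sub_const_le_of_ae_le hL (hg.integrable one_le_two) hgL 1
    _ ≤ Real.sqrt (∫ ω, (g ω - 1) ^ 2 ∂μ) + (1 - ∫ ω, g ω ∂μ) := by
        rw [hL1]
        gcongr
        exact integral_abs_le_sqrt_integral_sq (hg.sub (memLp_const 1))
    _ = _ := by rw [hsq]; ring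

/-- truncated second moment bound.  For a nonnegative integrable
`L` with `E[L] = 1`, any event `Ω₀`, and `L̃ = L·1_{Ω₀}` with `E[L̃²] < ∞`,
`E[|L − 1|] ≤ √(E[L̃²] − 2 E[L̃] + 1) + 1 − E[L̃]`. -/
theorem statement14 {Ω : Type*} [MeasurableSpace Ω] (μ : Measure Ω)
    [IsProbabilityMeasure μ]
    (L : Ω → ℝ) (hL : Integrable L μ) (hLnn : ∀ ω, 0 ≤ L ω)
    (hL1 : ∫ ω, L ω ∂μ = 1)
    (A : Set Ω) (hA : MeasurableSet A)
    (hL2 : Integrable (fun ω => (A.indicator L ω) ^ 2) μ) :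
    ∫ ω, |L ω - 1| ∂μ ≤
      Real.sqrt ((∫ ω, (A.indicator L ω) ^ 2 ∂μ) - 2 * (∫ ω, A.indicator L ω ∂μ) + 1)
        + 1 - ∫ ω, A.indicator L ω ∂μ :=
  statement14_general μ L hL hLnn hL1 A hL2
end

section
/- Let x = (x_{ij} : i ∈ [n], j ∈ [t]) be a real array, let z ∈ ℝ, and let π be uniformly distributed over the (nt)! permutations of the index set [n]×[t]. Let N = Σ_{i∈[n]} 1{Y_i(x^π) ≥ z} and p = P(Y₁(x^π) ≥ z). Then Var(N) ≤ n p (1 − p). -/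
/-!
Write `N = Σ_i I_i` with `I_i = 1{Y_i(x^π) ≥ z}`. Since `I_i² = I_i` and `E I_i = p`, the bound
`Var N ≤ n p (1 - p)` reduces to `E[I_i I_j] ≤ p²` for `i ≠ j`.

The blocks `i ≠ j` are carried by `π` to a uniformly random ordered pair `(B, C)` of disjoint
`t`-subsets of the index set, and `I_i = φ(Σ_B x)`, `I_j = φ(Σ_C x)` for a monotone `φ`.
Order the index set by the values of `x`, and its `t`-subsets by dominance of their increasing
enumerations: this is a distributive lattice. The function `B ↦ φ(Σ_B x)` is monotone on it, and
`B ↦ Σ_{C ⊆ Bᶜ} φ(Σ_C x)` is antitone, because a dominating `B` leaves a dominated complement.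
The FKG inequality on this lattice then gives `E[φ(Σ_B x) φ(Σ_C x)] ≤ p²`.
-/

noncomputable section

/-- Stream mean `Y_i(x) = (1/t) Σ_j x_{ij}`. -/
def streamMean (n t : ℕ) (x : Fin n × Fin t → ℝ) (i : Fin n) : ℝ :=
  (∑ j, x (i, j)) / t

open Finset
open scoped BigOperators Pointwise

section OrbitAverage

variable {G X : Type*} [Group G] [Fintype G] [MulAction G X] [DecidableEq X]

lemma card_filter_smul_eq_smul (x y : X) (ρ : G) :
    #{g : G | g • x = ρ • y} = #{g : G | g • x = y} :=
  (card_equiv (Equiv.mulLeft ρ) fun g => by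
    simp only [mem_filter, mem_univ, true_and, Equiv.coe_mulLeft, mul_smul,
      smul_left_cancel_iff]).symm

lemma expect_smul_eq_expect_of_forall_mem_iff {x : X} {T : Finset X}
    (hT : ∀ y, y ∈ T ↔ ∃ g : G, g • x = y) (F : X → ℝ) :
    𝔼 g : G, F (g • x) = 𝔼 y ∈ T, F y := by
  set c := #{g : G | g • x = x}
  have hfiber : ∀ y ∈ T, #{g : G | g • x = y} = c := by
    intro y hy
    obtain ⟨ρ, rfl⟩ := (hT y).1 hy
    exact card_filter_smul_eq_smul x x ρ
  have hmaps : ∀ g ∈ (univ : Finset G), g • x ∈ T := fun g _ => (hT _).2 ⟨g, rfl⟩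
  have hsum : ∑ g : G, F (g • x) = c * ∑ y ∈ T, F y := by
    rw [← sum_fiberwise_of_maps_to hmaps, mul_sum]
    refine sum_congr rfl fun y hy => ?_
    rw [sum_congr rfl fun g hg => by rw [(mem_filter.1 hg).2], sum_const, nsmul_eq_mul,
      ← hfiber y hy]
  have hcard : Fintype.card G = #T * c := by
    rw [← card_univ, card_eq_sum_card_fiberwise hmaps, sum_congr rfl hfiber, sum_const,
      smul_eq_mul]
  have hc : (c : ℝ) ≠ 0 := by exact_mod_cast (card_pos.2 ⟨1, by simp⟩).ne'
  rw [Fintype.expect_eq_sum_div_card, expect_eq_sum_div_card, hsum, hcard]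
  push_cast
  field_simp

end OrbitAverage

section PermFinset

variable {α : Type*} [DecidableEq α]

lemma sum_perm_smul_finset {M : Type*} [AddCommMonoid M] (σ : Equiv.Perm α) (B : Finset α)
    (f : α → M) : ∑ a ∈ σ • B, f a = ∑ a ∈ B, f (σ a) := by
  simp only [smul_finset_def, Equiv.Perm.smul_def]
  exact sum_image fun _ _ _ _ h => σ.injective h

variable [Fintype α]

lemma exists_perm_smul_finset_eq_and_smul_finset_eq {P₁ P₂ Q₁ Q₂ : Finset α}
    (hP : Disjoint P₁ P₂) (hQ : Disjoint Q₁ Q₂) (h₁ : #P₁ = #Q₁) (h₂ : #P₂ = #Q₂) :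
    ∃ ρ : Equiv.Perm α, ρ • P₁ = Q₁ ∧ ρ • P₂ = Q₂ := by
  let e : (P₁ ∪ P₂ : Finset α) ≃ (Q₁ ∪ Q₂ : Finset α) :=
    (Equiv.Finset.union P₁ P₂ hP).symm.trans
      (((P₁.equivOfCardEq h₁).sumCongr (P₂.equivOfCardEq h₂)).trans
        (Equiv.Finset.union Q₁ Q₂ hQ))
  have maps (P Q : Finset α) (hPQ : #P = #Q) (hP' : P ⊆ P₁ ∪ P₂)
      (he : ∀ a (ha : a ∈ P), (e ⟨a, hP' ha⟩ : α) ∈ Q) : e.extendSubtype • P = Q := by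
    refine eq_of_subset_of_card_le (fun b hb => ?_) ?_
    · obtain ⟨a, ha, rfl⟩ := mem_smul_finset.1 hb
      rw [Equiv.Perm.smul_def, Equiv.extendSubtype_apply_of_mem _ _ (hP' ha)]
      exact he a ha
    · rw [card_smul_finset, hPQ]
  refine ⟨e.extendSubtype, maps P₁ Q₁ h₁ subset_union_left fun a ha => ?_,
    maps P₂ Q₂ h₂ subset_union_right fun a ha => ?_⟩
  · simp only [e, Equiv.trans_apply, Equiv.Finset.union_symm_left hP ha, Equiv.sumCongr_apply,
      Sum.map_inl, Equiv.Finset.union_inl]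
    exact Subtype.prop _
  · simp only [e, Equiv.trans_apply, Equiv.Finset.union_symm_right hP ha, Equiv.sumCongr_apply,
      Sum.map_inr, Equiv.Finset.union_inr]
    exact Subtype.prop _

lemma exists_perm_smul_finset_eq_iff {B C : Finset α} :
    (∃ σ : Equiv.Perm α, σ • B = C) ↔ #C = #B := by
  refine ⟨fun ⟨σ, hσ⟩ => hσ ▸ card_smul_finset σ B, fun h => ?_⟩
  obtain ⟨σ, hσ, -⟩ := exists_perm_smul_finset_eq_and_smul_finset_eq (disjoint_empty_right B)
    (disjoint_empty_right C) h.symm rfl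
  exact ⟨σ, hσ⟩

lemma exists_perm_smul_prod_eq_iff {B C : Finset α} (hBC : Disjoint B C)
    {q : Finset α × Finset α} :
    (∃ σ : Equiv.Perm α, σ • (B, C) = q) ↔ #q.1 = #B ∧ #q.2 = #C ∧ Disjoint q.1 q.2 := by
  refine ⟨?_, fun ⟨h₁, h₂, hq⟩ => ?_⟩
  · rintro ⟨σ, rfl⟩
    refine ⟨card_smul_finset σ B, card_smul_finset σ C, ?_⟩
    simpa only [Prod.smul_mk, smul_finset_def, Equiv.Perm.smul_def] using
      (disjoint_image σ.injective).2 hBC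
  · obtain ⟨σ, hσ₁, hσ₂⟩ := exists_perm_smul_finset_eq_and_smul_finset_eq hBC hq h₁.symm h₂.symm
    exact ⟨σ, Prod.ext hσ₁ hσ₂⟩

end PermFinset

lemma card_mul_sum_le_sum_mul_sum_of_monotone_of_antitone {L : Type*} [DistribLattice L]
    [Fintype L] {f g : L → ℝ} (hf : Monotone f) (hg : Antitone g) :
    Fintype.card L * ∑ a, f a * g a ≤ (∑ a, f a) * ∑ a, g a := by
  -- FKG needs nonnegative functions; both sides change by the same amount under shifts.
  set c := ∑ a, |f a|
  set d := ∑ a, |g a|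
  have hc : ∀ a, |f a| ≤ c := fun a => single_le_sum (fun b _ => abs_nonneg (f b)) (mem_univ a)
  have hd : ∀ a, |g a| ≤ d := fun a => single_le_sum (fun b _ => abs_nonneg (g b)) (mem_univ a)
  have key := fkg (μ := 1) (f := fun a => f a + c) (g := fun a => d - g a) (fun _ => zero_le_one)
    (fun a => show 0 ≤ f a + c by linarith [neg_abs_le (f a), hc a])
    (fun a => show 0 ≤ d - g a by linarith [le_abs_self (g a), hd a])
    (fun a b hab => add_le_add_left (hf hab) c) (fun a b hab => sub_le_sub_left (hg hab) d)
    (fun _ _ => by simp)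
  simp only [Pi.one_apply, one_mul, add_mul, mul_sub, mul_add, sum_add_distrib, sum_sub_distrib,
    ← mul_sum, ← sum_mul, sum_const, card_univ, nsmul_eq_mul, mul_one] at key
  nlinarith [key]

lemma sum_powersetCard_map_le {α ι : Type*} [DecidableEq α] [Fintype ι] (x : α → ℝ)
    {φ : ℝ → ℝ} (hφ : Monotone φ) {u v : ι ↪ α} (huv : ∀ i, x (u i) ≤ x (v i)) (t : ℕ) :
    ∑ C ∈ powersetCard t (univ.map u), φ (∑ a ∈ C, x a)
      ≤ ∑ C ∈ powersetCard t (univ.map v), φ (∑ a ∈ C, x a) := by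
  simp only [powersetCard_map, sum_map, RelEmbedding.coe_toEmbedding, mapEmbedding_apply]
  exact sum_le_sum fun K _ => hφ (sum_le_sum fun i _ => huv i)

section Dominance

/-- The `t`-subsets of `α`, as their increasing enumerations, ordered by dominance. -/
def strictMonoSublattice (t : ℕ) (α : Type*) [LinearOrder α] : Sublattice (Fin t → α) where
  carrier := {f | StrictMono f}
  supClosed' _ hf _ hg _ _ hij := max_lt_max (hf hij) (hg hij)
  infClosed' _ hf _ hg _ _ hij := min_lt_min (hf hij) (hg hij)

variable {α : Type*} [LinearOrder α]

lemma forall_le_iff_card_filter_le {k : ℕ} {u v : Fin k → α} (hu : StrictMono u)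
    (hv : StrictMono v) : (∀ i, u i ≤ v i) ↔ ∀ y, #{i | y ≤ u i} ≤ #{i | y ≤ v i} := by
  refine ⟨fun huv y => card_le_card fun i => by simpa using (le_trans · (huv i)), fun h => ?_⟩
  by_contra! ⟨i, hvu⟩
  have hIci : ({j | u i ≤ u j} : Finset (Fin k)) = Ici i := by ext j; simp [hu.le_iff_le]
  have hIoi : ({j | u i ≤ v j} : Finset (Fin k)) ⊆ Ioi i := fun j hj => by
    simp only [mem_filter, mem_univ, true_and] at hj
    exact mem_Ioi.2 (lt_of_not_ge fun hji => (hvu.trans_le hj).not_ge (hv.monotone hji))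
  have := (h (u i)).trans (card_le_card hIoi)
  rw [hIci, Fin.card_Ici, Fin.card_Ioi] at this
  omega

lemma card_filter_le_eq_card_filter_le_image {k : ℕ} {u : Fin k → α}
    (hu : Function.Injective u) (y : α) : #{i | y ≤ u i} = #{a ∈ univ.image u | y ≤ a} := by
  rw [filter_image, card_image_of_injective _ hu]

lemma monotone_comp_sum_image (x : α → ℝ) (hx : Monotone x) {φ : ℝ → ℝ} (hφ : Monotone φ)
    {t : ℕ} :
    Monotone fun f : strictMonoSublattice t α => φ (∑ a ∈ univ.image (f : Fin t → α), x a) := by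
  intro f g hfg
  apply hφ
  rw [sum_image fun _ _ _ _ h => f.2.injective h, sum_image fun _ _ _ _ h => g.2.injective h]
  exact sum_le_sum fun i _ => hx (hfg i)

variable [Fintype α]

instance {t : ℕ} : Fintype (strictMonoSublattice t α) := Fintype.ofFinite _

lemma card_filter_le_add_card_filter_le_compl (s : Finset α) (y : α) :
    #{a ∈ s | y ≤ a} + #{a ∈ sᶜ | y ≤ a} = #{a | y ≤ a} := by
  rw [← card_union_of_disjoint (disjoint_filter_filter disjoint_compl_right), ← filter_union,
    union_compl]

lemma orderEmbOfFin_compl_image_le {k l : ℕ} {u v : Fin k → α} (hu : StrictMono u)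
    (hv : StrictMono v) (huv : ∀ i, u i ≤ v i) (hu' : #(univ.image u)ᶜ = l)
    (hv' : #(univ.image v)ᶜ = l) (i : Fin l) :
    (univ.image v)ᶜ.orderEmbOfFin hv' i ≤ (univ.image u)ᶜ.orderEmbOfFin hu' i := by
  revert i
  rw [forall_le_iff_card_filter_le (OrderEmbedding.strictMono _) (OrderEmbedding.strictMono _)]
  intro y
  have hcount := (forall_le_iff_card_filter_le hu hv).1 huv y
  rw [card_filter_le_eq_card_filter_le_image hu.injective,
    card_filter_le_eq_card_filter_le_image hv.injective] at hcount
  rw [card_filter_le_eq_card_filter_le_image (OrderEmbedding.strictMono _).injective,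
    card_filter_le_eq_card_filter_le_image (OrderEmbedding.strictMono _).injective]
  simp only [image_orderEmbOfFin_univ]
  have := card_filter_le_add_card_filter_le_compl (univ.image u) y
  have := card_filter_le_add_card_filter_le_compl (univ.image v) y
  omega

lemma sum_powersetCard_eq_sum_strictMonoSublattice {t : ℕ} (Φ : Finset α → ℝ) :
    ∑ B ∈ powersetCard t univ, Φ B
      = ∑ f : strictMonoSublattice t α, Φ (univ.image (f : Fin t → α)) :=
  sum_bij' (fun B hB => ⟨B.orderEmbOfFin (mem_powersetCard.1 hB).2, OrderEmbedding.strictMono _⟩)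
    (fun f _ => univ.image (f : Fin t → α)) (fun _ _ => mem_univ _)
    (fun f _ => mem_powersetCard.2 ⟨subset_univ _, by
      rw [card_image_of_injective _ f.2.injective, card_univ, Fintype.card_fin]⟩)
    (fun B _ => image_orderEmbOfFin_univ _ _)
    (fun f _ => Subtype.ext (orderEmbOfFin_unique _ (fun i => mem_image_of_mem _ (mem_univ i))
      f.2).symm)
    (fun B _ => by simp only [image_orderEmbOfFin_univ])

variable (x : α → ℝ) {φ : ℝ → ℝ}

lemma antitone_sum_powersetCard_compl_image (hx : Monotone x) (hφ : Monotone φ) {t : ℕ} :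
    Antitone fun f : strictMonoSublattice t α =>
      ∑ C ∈ powersetCard t (univ.image (f : Fin t → α))ᶜ, φ (∑ a ∈ C, x a) := by
  intro f g hfg
  have hcard (f : strictMonoSublattice t α) :
      #(univ.image (f : Fin t → α))ᶜ = Fintype.card α - t := by
    rw [card_compl, card_image_of_injective _ f.2.injective, card_univ, Fintype.card_fin]
  dsimp only
  rw [← map_orderEmbOfFin_univ _ (hcard f), ← map_orderEmbOfFin_univ _ (hcard g)]
  exact sum_powersetCard_map_le x hφ
    (fun i => hx (orderEmbOfFin_compl_image_le f.2 g.2 hfg (hcard f) (hcard g) i)) t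

theorem card_mul_sum_mul_sum_compl_le_of_monotone (hx : Monotone x) (hφ : Monotone φ) (t : ℕ) :
    #(powersetCard t (univ : Finset α)) *
        ∑ B ∈ powersetCard t univ, φ (∑ a ∈ B, x a) * ∑ C ∈ powersetCard t Bᶜ, φ (∑ a ∈ C, x a)
      ≤ (∑ B ∈ powersetCard t univ, φ (∑ a ∈ B, x a)) *
          ∑ B ∈ powersetCard t univ, ∑ C ∈ powersetCard t Bᶜ, φ (∑ a ∈ C, x a) := by
  have hcard : (#(powersetCard t (univ : Finset α)) : ℝ)
      = Fintype.card (strictMonoSublattice t α) := by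
    simpa using sum_powersetCard_eq_sum_strictMonoSublattice (t := t) (fun _ => (1 : ℝ))
  simp only [hcard, sum_powersetCard_eq_sum_strictMonoSublattice (t := t)]
  exact card_mul_sum_le_sum_mul_sum_of_monotone_of_antitone (monotone_comp_sum_image x hx hφ)
    (antitone_sum_powersetCard_compl_image x hx hφ)

end Dominance

section NegativeCorrelation

variable {α : Type*} [Fintype α] [DecidableEq α]

theorem card_mul_sum_mul_sum_compl_le (x : α → ℝ) {φ : ℝ → ℝ} (hφ : Monotone φ) (t : ℕ) :
    #(powersetCard t (univ : Finset α)) *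
        ∑ B ∈ powersetCard t univ, φ (∑ a ∈ B, x a) * ∑ C ∈ powersetCard t Bᶜ, φ (∑ a ∈ C, x a)
      ≤ (∑ B ∈ powersetCard t univ, φ (∑ a ∈ B, x a)) *
          ∑ B ∈ powersetCard t univ, ∑ C ∈ powersetCard t Bᶜ, φ (∑ a ∈ C, x a) := by
  -- Order `α` by `x`, breaking ties by an enumeration of `α`.
  let : LinearOrder α := LinearOrder.lift' (fun a => toLex (x a, Fintype.equivFin α a))
    fun a b h => (Fintype.equivFin α).injective (Prod.ext_iff.1 (toLex.injective h)).2
  have hx : Monotone x := fun a b hab => (Prod.Lex.le_iff.1 hab).elim le_of_lt (·.1.le)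
  convert card_mul_sum_mul_sum_compl_le_of_monotone x hx hφ t

variable (α) in
def disjointPairs (t : ℕ) : Finset (Finset α × Finset α) :=
  {q ∈ powersetCard t univ ×ˢ powersetCard t univ | Disjoint q.1 q.2}

lemma mem_disjointPairs {t : ℕ} {q : Finset α × Finset α} :
    q ∈ disjointPairs α t ↔ #q.1 = t ∧ #q.2 = t ∧ Disjoint q.1 q.2 := by
  simp [disjointPairs, and_assoc]

lemma sum_disjointPairs {M : Type*} [AddCommMonoid M] {t : ℕ} (G : Finset α × Finset α → M) :
    ∑ q ∈ disjointPairs α t, G q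
      = ∑ B ∈ powersetCard t univ, ∑ C ∈ powersetCard t Bᶜ, G (B, C) := by
  rw [disjointPairs, sum_filter, sum_product]
  refine sum_congr rfl fun B _ => ?_
  rw [← sum_filter]
  congr 1
  ext C
  simp [mem_powersetCard, subset_compl_iff_disjoint_left, and_comm]

lemma card_powersetCard_compl {t : ℕ} {B : Finset α} (hB : #B = t) :
    #(powersetCard t Bᶜ) = (Fintype.card α - t).choose t := by
  rw [card_powersetCard, card_compl, hB]

theorem expect_disjointPairs_mul_le_sq (x : α → ℝ) {φ : ℝ → ℝ} (hφ : Monotone φ) (t : ℕ) :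
    𝔼 q ∈ disjointPairs α t, φ (∑ a ∈ q.1, x a) * φ (∑ a ∈ q.2, x a)
      ≤ (𝔼 B ∈ powersetCard t univ, φ (∑ a ∈ B, x a)) ^ 2 := by
  have key := card_mul_sum_mul_sum_compl_le x hφ t
  set F : Finset α → ℝ := fun B => φ (∑ a ∈ B, x a)
  set P := powersetCard t (univ : Finset α)
  set c := (Fintype.card α - t).choose t
  have hcompl : ∀ B ∈ P, #(powersetCard t Bᶜ) = c := fun B hB =>
    card_powersetCard_compl (mem_powersetCard.1 hB).2
  have hcard : #(disjointPairs α t) = #P * c := by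
    rw [card_eq_sum_ones, sum_disjointPairs, sum_const_nat fun B hB => by
      rw [← card_eq_sum_ones, hcompl B hB]]
  have hpairs : ∑ q ∈ disjointPairs α t, F q.1 * F q.2
      = ∑ B ∈ P, F B * ∑ C ∈ powersetCard t Bᶜ, F C := by
    simp only [sum_disjointPairs, mul_sum, P]
  -- Double counting: each `C ∈ P` is disjoint from exactly `c` members of `P`.
  have hcount : ∑ B ∈ P, ∑ C ∈ powersetCard t Bᶜ, F C = c * ∑ B ∈ P, F B := by
    rw [sum_comm' (t' := P) (s' := fun C => powersetCard t Cᶜ), mul_sum]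
    · exact sum_congr rfl fun C hC => by rw [sum_const, hcompl C hC, nsmul_eq_mul]
    · intro B C
      simp [P, mem_powersetCard, subset_compl_comm (s := C), and_comm, and_left_comm]
  rcases Nat.eq_zero_or_pos (#P * c) with h0 | hpos
  · rw [expect_eq_sum_div_card, hcard, h0, Nat.cast_zero, div_zero]
    positivity
  have hP : (0 : ℝ) < #P := by exact_mod_cast pos_of_mul_pos_left hpos (Nat.zero_le c)
  rw [expect_eq_sum_div_card, expect_eq_sum_div_card, hcard, hpairs, div_pow,
    div_le_div_iff₀ (by exact_mod_cast hpos) (pow_pos hP 2)]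
  rw [hcount] at key
  push_cast
  nlinarith [key]

theorem expect_perm_smul_finset_eq {t : ℕ} {B₀ : Finset α} (hB₀ : #B₀ = t) (F : Finset α → ℝ) :
    𝔼 σ : Equiv.Perm α, F (σ • B₀) = 𝔼 B ∈ powersetCard t univ, F B :=
  expect_smul_eq_expect_of_forall_mem_iff (fun B => by
    rw [mem_powersetCard_univ, exists_perm_smul_finset_eq_iff, hB₀]) F

theorem expect_perm_mul_le_sq {t : ℕ} {B₀ C₀ : Finset α} (hB₀ : #B₀ = t) (hC₀ : #C₀ = t)
    (hBC : Disjoint B₀ C₀) (x : α → ℝ) {φ : ℝ → ℝ} (hφ : Monotone φ) :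
    𝔼 σ : Equiv.Perm α, φ (∑ a ∈ σ • B₀, x a) * φ (∑ a ∈ σ • C₀, x a)
      ≤ (𝔼 B ∈ powersetCard t univ, φ (∑ a ∈ B, x a)) ^ 2 :=
  calc 𝔼 σ : Equiv.Perm α, φ (∑ a ∈ σ • B₀, x a) * φ (∑ a ∈ σ • C₀, x a)
      = 𝔼 q ∈ disjointPairs α t, φ (∑ a ∈ q.1, x a) * φ (∑ a ∈ q.2, x a) :=
        expect_smul_eq_expect_of_forall_mem_iff (x := (B₀, C₀)) (fun q => by
          rw [mem_disjointPairs, exists_perm_smul_prod_eq_iff hBC, hB₀, hC₀])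
          (fun q => φ (∑ a ∈ q.1, x a) * φ (∑ a ∈ q.2, x a))
    _ ≤ _ := expect_disjointPairs_mul_le_sq x hφ t

end NegativeCorrelation

theorem expect_sq_sub_expect_sum_le {Ω ι : Type*} [Fintype Ω] [Nonempty Ω] [Fintype ι]
    [DecidableEq ι] (I : ι → Ω → ℝ) {p : ℝ} (hidem : ∀ i ω, I i ω * I i ω = I i ω)
    (hmean : ∀ i, 𝔼 ω, I i ω = p) (hcov : ∀ i j, i ≠ j → 𝔼 ω, I i ω * I j ω ≤ p ^ 2) :
    𝔼 ω, (∑ i, I i ω - 𝔼 ω', ∑ i, I i ω') ^ 2 ≤ Fintype.card ι * p * (1 - p) := by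
  have hm : 𝔼 ω, ∑ i, I i ω = Fintype.card ι * p := by
    rw [expect_sum_comm, sum_congr rfl fun i _ => hmean i, sum_const, card_univ, nsmul_eq_mul]
  have hvar : 𝔼 ω, (∑ i, I i ω - 𝔼 ω', ∑ i, I i ω') ^ 2
      = ∑ i, ∑ j, 𝔼 ω, I i ω * I j ω - (Fintype.card ι * p) ^ 2 := by
    rw [hm]
    calc 𝔼 ω, (∑ i, I i ω - Fintype.card ι * p) ^ 2
        = 𝔼 ω, ((∑ i, ∑ j, I i ω * I j ω) - 2 * (Fintype.card ι * p) * ∑ i, I i ω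
            + (Fintype.card ι * p) ^ 2) :=
          expect_congr rfl fun ω _ => by rw [← sum_mul_sum]; ring
      _ = ∑ i, ∑ j, 𝔼 ω, I i ω * I j ω - (Fintype.card ι * p) ^ 2 := by
          rw [expect_add_distrib, expect_sub_distrib, ← mul_expect, Fintype.expect_const,
            expect_sum_comm, sum_congr rfl fun i _ => expect_sum_comm _ _ _, hm]
          ring
  have hrow (i : ι) :
      ∑ j, 𝔼 ω, I i ω * I j ω ≤ ∑ j, (p ^ 2 + if i = j then p - p ^ 2 else 0) := by
    refine sum_le_sum fun j _ => ?_
    split_ifs with hij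
    · subst hij
      simp only [hidem, hmean]
      linarith
    · simpa using hcov i j hij
  have hsum := sum_le_sum fun i (_ : i ∈ univ) => hrow i
  simp only [sum_add_distrib, sum_ite_eq, mem_univ, if_true, sum_const, card_univ,
    nsmul_eq_mul] at hsum
  rw [hvar]
  linear_combination hsum

attribute [local instance] Classical.propDecidable

/-- variance bound for the permutation count, via negative
association.  For a uniformly random permutation `π` of the array indices, with
`N = Σ_i 1{Y_i(x^π) ≥ z}` and `p = P(Y₁(x^π) ≥ z)`, one has `Var(N) ≤ n p (1 − p)`. -/
theorem statement17 (n t : ℕ) (hn : 0 < n) (x : Fin n × Fin t → ℝ) (z : ℝ) :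
    let Nf : Equiv.Perm (Fin n × Fin t) → ℝ := fun σ =>
      ((Finset.univ.filter fun i : Fin n =>
          streamMean n t (fun p => x (σ p)) i ≥ z).card : ℝ)
    let E : (Equiv.Perm (Fin n × Fin t) → ℝ) → ℝ := fun f =>
      (∑ σ : Equiv.Perm (Fin n × Fin t), f σ) / (n * t).factorial
    let p : ℝ := E fun σ =>
      if streamMean n t (fun p => x (σ p)) ⟨0, hn⟩ ≥ z then 1 else 0
    E (fun σ => (Nf σ - E Nf) ^ 2) ≤ n * p * (1 - p) := by
  intro Nf E p
  let φ (s : ℝ) : ℝ := if z ≤ s / t then 1 else 0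
  have hφ : Monotone φ := fun a b hab => by
    by_cases ha : z ≤ a / t
    · simp [φ, ha, ha.trans (div_le_div_of_nonneg_right hab t.cast_nonneg)]
    · simp only [φ, ha, if_false]
      split_ifs <;> norm_num
  let blk (i : Fin n) : Finset (Fin n × Fin t) := {i} ×ˢ univ
  have hblk (i : Fin n) : #(blk i) = t := by simp [blk]
  let I (i : Fin n) (σ : Equiv.Perm (Fin n × Fin t)) : ℝ := φ (∑ a ∈ σ • blk i, x a)
  have hI (i : Fin n) (σ : Equiv.Perm (Fin n × Fin t)) :
      I i σ = if streamMean n t (fun q => x (σ q)) i ≥ z then 1 else 0 := by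
    simp only [I, φ, blk, sum_perm_smul_finset, sum_product, sum_singleton, streamMean, ge_iff_le]
  have hE (f : Equiv.Perm (Fin n × Fin t) → ℝ) : E f = 𝔼 σ, f σ := by
    simp only [E, Fintype.expect_eq_sum_div_card, Fintype.card_perm, Fintype.card_prod,
      Fintype.card_fin]
  have hmean (i : Fin n) : 𝔼 σ, I i σ = 𝔼 B ∈ powersetCard t univ, φ (∑ a ∈ B, x a) :=
    expect_perm_smul_finset_eq (hblk i) fun B => φ (∑ a ∈ B, x a)
  have hcov (i j : Fin n) (hij : i ≠ j) :
      𝔼 σ, I i σ * I j σ ≤ (𝔼 B ∈ powersetCard t univ, φ (∑ a ∈ B, x a)) ^ 2 :=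
    expect_perm_mul_le_sq (hblk i) (hblk j)
      (disjoint_product.2 (Or.inl (disjoint_singleton.2 hij))) x hφ
  have hp : p = 𝔼 B ∈ powersetCard t univ, φ (∑ a ∈ B, x a) := by
    rw [← hmean ⟨0, hn⟩, show p = E _ from rfl, hE]
    simp only [hI]
  have hN (σ : Equiv.Perm (Fin n × Fin t)) : Nf σ = ∑ i, I i σ := by
    simp only [Nf, natCast_card_filter, hI]
  have hidem (i : Fin n) (σ : Equiv.Perm (Fin n × Fin t)) : I i σ * I i σ = I i σ := by
    simp only [I, φ]
    split_ifs <;> norm_num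
  simp only [hE, hN, hp]
  simpa using expect_sq_sub_expect_sum_le I hidem hmean hcov
end
end

section
/- Let x = (x_{ij} : i ∈ [n], j ∈ [t]) be a real array and Q ⊂ [0, ∞) a finite grid. With x̄, σ_x², N̂_q, P̂_q, V̂_q defined as in the higher criticism permutation test (with the convention 0/0 = 0), set T̂(x) = max_{q∈Q} V̂_q(x). If T̂(x) > 0, then the permutation p-value satisfies (1/(nt)!)·|{π ∈ Π : T̂(x^π) ≥ T̂(x)}| ≤ |Q| / T̂(x)². -/
open Real Filter Finset Function

attribute [local instance] Classical.propDecidable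
set_option linter.unusedSectionVars false
set_option maxHeartbeats 1000000

noncomputable section

/-- Overall sample mean `x̄`. -/
def arrMean (n t : ℕ) (x : Fin n × Fin t → ℝ) : ℝ :=
  (∑ p, x p) / (n * t)

/-- Overall sample variance `σ_x²`. -/
def arrVar (n t : ℕ) (x : Fin n × Fin t → ℝ) : ℝ :=
  (∑ p, (x p - arrMean n t x) ^ 2) / (n * t)

/-- The `q`-threshold `√(2 σ_x² q log(n) / t)`. -/
def thr (n t : ℕ) (x : Fin n × Fin t → ℝ) (q : ℝ) : ℝ :=
  Real.sqrt (2 * arrVar n t x * q * Real.log n / t)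

/-- `N̂_q(x)`: number of streams whose centered mean exceeds the `q`-threshold. -/
def Nhat (n t : ℕ) (x : Fin n × Fin t → ℝ) (q : ℝ) : ℕ :=
  (Finset.univ.filter fun i : Fin n =>
    streamMean n t x i - arrMean n t x ≥ thr n t x q).card

/-- `P̂_q(x)`: permutation probability that the first permuted stream mean exceeds the
`q`-threshold. -/
def Phat (n t : ℕ) (x : Fin n × Fin t → ℝ) (q : ℝ) : ℝ :=
  if hn : 0 < n then
    ((Finset.univ.filter fun σ : Equiv.Perm (Fin n × Fin t) =>
        streamMean n t (fun p => x (σ p)) ⟨0, hn⟩ - arrMean n t x ≥ thr n t x q).card : ℝ)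
      / (n * t).factorial
  else 0

/-- `V̂_q(x) = (N̂_q(x) − n P̂_q(x))/√(n P̂_q(x)(1 − P̂_q(x)))` (with `0/0 = 0`, which is
the convention of Lean's real division). -/
def Vhat (n t : ℕ) (x : Fin n × Fin t → ℝ) (q : ℝ) : ℝ :=
  ((Nhat n t x q : ℝ) - n * Phat n t x q) /
    Real.sqrt (n * Phat n t x q * (1 - Phat n t x q))


namespace HCaux

variable {α : Type*} [DecidableEq α]

/-- number of `a`-subsets of `u` with `v`-sum at least `c`. -/
def cnt1 (v : α → ℝ) (u : Finset α) (a : ℕ) (c : ℝ) : ℕ :=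
  ((u.powersetCard a).filter fun A => c ≤ ∑ i ∈ A, v i).card

/-- number of disjoint pairs of an `a`-subset and a `b`-subset of `u` with sums above
`c` resp. `d`. -/
def cntP (v : α → ℝ) (u : Finset α) (a b : ℕ) (c d : ℝ) : ℕ :=
  (((u.powersetCard a) ×ˢ (u.powersetCard b)).filter fun p =>
    Disjoint p.1 p.2 ∧ c ≤ ∑ i ∈ p.1, v i ∧ d ≤ ∑ i ∈ p.2, v i).card

lemma cntP_eq_zero {v : α → ℝ} {u : Finset α} {a b : ℕ} {c d : ℝ}
    (h : u.card < a + b) : cntP v u a b c d = 0 := by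
  rw [cntP, Finset.card_eq_zero, Finset.filter_eq_empty_iff]
  rintro ⟨A, B⟩ hm ⟨hdisj, -, -⟩
  rw [Finset.mem_product, Finset.mem_powersetCard, Finset.mem_powersetCard] at hm
  obtain ⟨⟨hAu, hA⟩, hBu, hB⟩ := hm
  have : (A ∪ B).card ≤ u.card := Finset.card_le_card (Finset.union_subset hAu hBu)
  rw [Finset.card_union_of_disjoint hdisj, hA, hB] at this
  omega

lemma cntP_symm (v : α → ℝ) (u : Finset α) (a b : ℕ) (c d : ℝ) :
    cntP v u a b c d = cntP v u b a d c := by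
  rw [cntP, cntP]
  refine Finset.card_nbij' (fun p => Prod.swap p) (fun p => Prod.swap p) ?hi ?hj ?li ?ri
  · rintro ⟨A, B⟩ hm
    obtain ⟨hmem, hdisj, hc, hd⟩ := Finset.mem_filter.1 hm
    obtain ⟨h1, h2⟩ := Finset.mem_product.1 hmem
    exact Finset.mem_filter.2 ⟨Finset.mem_product.2 ⟨h2, h1⟩, hdisj.symm, hd, hc⟩
  · rintro ⟨A, B⟩ hm
    obtain ⟨hmem, hdisj, hc, hd⟩ := Finset.mem_filter.1 hm
    obtain ⟨h1, h2⟩ := Finset.mem_product.1 hmem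
    exact Finset.mem_filter.2 ⟨Finset.mem_product.2 ⟨h2, h1⟩, hdisj.symm, hd, hc⟩
  · intro _ _; rfl
  · intro _ _; rfl

lemma cnt1_zero (v : α → ℝ) (u : Finset α) (c : ℝ) :
    cnt1 v u 0 c = if c ≤ 0 then 1 else 0 := by
  rw [cnt1, Finset.powersetCard_zero]
  by_cases h : c ≤ 0
  · rw [if_pos h, Finset.filter_eq_self.2]
    · simp
    · intro A hA
      rw [Finset.mem_singleton] at hA
      subst hA; simpa using h
  · rw [if_neg h, Finset.card_eq_zero, Finset.filter_eq_empty_iff]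
    intro A hA
    rw [Finset.mem_singleton] at hA
    subst hA; simpa using h

lemma cntP_zero_left (v : α → ℝ) (u : Finset α) (b : ℕ) (c d : ℝ) :
    cntP v u 0 b c d = (if c ≤ 0 then 1 else 0) * cnt1 v u b d := by
  by_cases h : c ≤ 0
  · rw [if_pos h, one_mul, cntP, cnt1]
    refine Finset.card_nbij' (fun p => p.2) (fun B => (∅, B)) ?hi ?hj ?li ?ri
    · rintro ⟨A, B⟩ hm
      obtain ⟨hmem, hdisj, hc, hd⟩ := Finset.mem_filter.1 hm
      exact Finset.mem_filter.2 ⟨(Finset.mem_product.1 hmem).2, hd⟩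
    · intro B hm
      obtain ⟨hmem, hd⟩ := Finset.mem_filter.1 hm
      refine Finset.mem_filter.2 ⟨Finset.mem_product.2 ⟨?_, hmem⟩,
        Finset.disjoint_empty_left _, by simpa using h, hd⟩
      rw [Finset.powersetCard_zero, Finset.mem_singleton]
    · rintro ⟨A, B⟩ hm
      obtain ⟨hmem, -⟩ := Finset.mem_filter.1 hm
      have : A ∈ Finset.powersetCard 0 u := (Finset.mem_product.1 hmem).1
      rw [Finset.powersetCard_zero, Finset.mem_singleton] at this
      simp [this]
    · intro _ _; rfl
  · rw [if_neg h, zero_mul, cntP, Finset.card_eq_zero, Finset.filter_eq_empty_iff]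
    rintro ⟨A, B⟩ hm ⟨-, hc, -⟩
    have : A ∈ Finset.powersetCard 0 u := (Finset.mem_product.1 hm).1
    rw [Finset.powersetCard_zero, Finset.mem_singleton] at this
    rw [this] at hc
    rw [Finset.sum_empty] at hc
    exact h hc

/-- splitting an `(a+1)`-subset count according to membership of a fixed `k ∈ u`. -/
lemma cnt1_split (v : α → ℝ) {u : Finset α} {k : α} (hk : k ∈ u) (a : ℕ) (c : ℝ) :
    cnt1 v u (a + 1) c
      = cnt1 v (u.erase k) a (c - v k) + cnt1 v (u.erase k) (a + 1) c := by
  rw [cnt1, ← Finset.card_filter_add_card_filter_not (p := fun A => k ∈ A)]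
  congr 1
  · -- erase bijection
    rw [cnt1]
    refine Finset.card_nbij' (fun A => A.erase k) (fun A => insert k A) ?hi ?hj ?li ?ri
    · intro A hm
      obtain ⟨hm1, hkA⟩ := Finset.mem_filter.1 hm
      obtain ⟨hmem, hsum⟩ := Finset.mem_filter.1 hm1
      obtain ⟨hAu, hcard⟩ := Finset.mem_powersetCard.1 hmem
      refine Finset.mem_filter.2 ⟨Finset.mem_powersetCard.2
        ⟨Finset.erase_subset_erase _ hAu, ?_⟩, ?_⟩
      · rw [Finset.card_erase_of_mem hkA, hcard]; omega
      · have := Finset.sum_erase_add A v hkA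
        linarith
    · intro A hm
      obtain ⟨hmem, hsum⟩ := Finset.mem_filter.1 hm
      obtain ⟨hAu, hcard⟩ := Finset.mem_powersetCard.1 hmem
      obtain ⟨hAu', hkA⟩ := Finset.subset_erase.1 hAu
      refine Finset.mem_filter.2 ⟨Finset.mem_filter.2 ⟨Finset.mem_powersetCard.2
        ⟨Finset.insert_subset hk hAu', ?_⟩, ?_⟩, Finset.mem_insert_self _ _⟩
      · rw [Finset.card_insert_of_notMem hkA, hcard]
      · rw [Finset.sum_insert hkA]; linarith
    · intro A hm
      exact Finset.insert_erase (Finset.mem_filter.1 hm).2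
    · intro A hm
      obtain ⟨hmem, -⟩ := Finset.mem_filter.1 hm
      obtain ⟨hAu, -⟩ := Finset.mem_powersetCard.1 hmem
      exact Finset.erase_insert (Finset.subset_erase.1 hAu).2
  · -- identity
    rw [cnt1]
    congr 1
    ext A
    rw [Finset.mem_filter, Finset.mem_filter, Finset.mem_filter, Finset.mem_powersetCard,
      Finset.mem_powersetCard, Finset.subset_erase]
    tauto

/-- 3-way split of the pairs count. -/
lemma cntP_split (v : α → ℝ) {u : Finset α} {k : α} (hk : k ∈ u) (a b : ℕ) (c d : ℝ) :
    cntP v u (a + 1) (b + 1) c d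
      = cntP v (u.erase k) a (b + 1) (c - v k) d
        + cntP v (u.erase k) (a + 1) b c (d - v k)
        + cntP v (u.erase k) (a + 1) (b + 1) c d := by
  rw [cntP, ← Finset.card_filter_add_card_filter_not
    (p := fun p : Finset α × Finset α => k ∈ p.1), add_assoc]
  congr 1
  · -- k ∈ A part
    rw [cntP]
    refine Finset.card_nbij' (fun p => (p.1.erase k, p.2)) (fun p => (insert k p.1, p.2)) ?hi ?hj ?li ?ri
    · intro p hm
      obtain ⟨hm1, hkA⟩ := Finset.mem_filter.1 hm
      obtain ⟨hmem, hdisj, hcs, hds⟩ := Finset.mem_filter.1 hm1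
      obtain ⟨hmA, hmB⟩ := Finset.mem_product.1 hmem
      obtain ⟨hAu, hA⟩ := Finset.mem_powersetCard.1 hmA
      obtain ⟨hBu, hB⟩ := Finset.mem_powersetCard.1 hmB
      have hkB : k ∉ p.2 := Finset.disjoint_left.1 hdisj hkA
      have hsum : c - v k ≤ ∑ i ∈ p.1.erase k, v i := by
        have := Finset.sum_erase_add p.1 v hkA
        linarith
      exact Finset.mem_filter.2 ⟨Finset.mem_product.2 ⟨Finset.mem_powersetCard.2
        ⟨Finset.erase_subset_erase _ hAu, by rw [Finset.card_erase_of_mem hkA, hA]; omega⟩,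
        Finset.mem_powersetCard.2 ⟨Finset.subset_erase.2 ⟨hBu, hkB⟩, hB⟩⟩,
        Finset.disjoint_of_subset_left (Finset.erase_subset _ _) hdisj, hsum, hds⟩
    · intro p hm
      obtain ⟨hmem, hdisj, hcs, hds⟩ := Finset.mem_filter.1 hm
      obtain ⟨hmA, hmB⟩ := Finset.mem_product.1 hmem
      obtain ⟨hAu, hA⟩ := Finset.mem_powersetCard.1 hmA
      obtain ⟨hBu, hB⟩ := Finset.mem_powersetCard.1 hmB
      obtain ⟨hAu', hkA⟩ := Finset.subset_erase.1 hAu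
      obtain ⟨hBu', hkB⟩ := Finset.subset_erase.1 hBu
      have hdisj' : Disjoint (insert k p.1) p.2 := by
        rw [Finset.disjoint_left]
        intro y hy
        rcases Finset.mem_insert.1 hy with rfl | hy
        · exact hkB
        · exact Finset.disjoint_left.1 hdisj hy
      have hsum : c ≤ ∑ i ∈ insert k p.1, v i := by
        rw [Finset.sum_insert hkA]; linarith
      exact Finset.mem_filter.2 ⟨Finset.mem_filter.2 ⟨Finset.mem_product.2
        ⟨Finset.mem_powersetCard.2 ⟨Finset.insert_subset hk hAu',
          by rw [Finset.card_insert_of_notMem hkA, hA]⟩,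
         Finset.mem_powersetCard.2 ⟨hBu', hB⟩⟩, hdisj', hsum, hds⟩,
        Finset.mem_insert_self _ _⟩
    · intro p hm
      obtain ⟨-, hkA⟩ := Finset.mem_filter.1 hm
      show (insert k (p.1.erase k), p.2) = p
      rw [Finset.insert_erase hkA]
    · intro p hm
      obtain ⟨hmem, -⟩ := Finset.mem_filter.1 hm
      obtain ⟨hmA, -⟩ := Finset.mem_product.1 hmem
      obtain ⟨hAu, -⟩ := Finset.mem_powersetCard.1 hmA
      show ((insert k p.1).erase k, p.2) = p
      rw [Finset.erase_insert (Finset.subset_erase.1 hAu).2]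
  rw [← Finset.card_filter_add_card_filter_not
    (p := fun p : Finset α × Finset α => k ∈ p.2)
    (s := Finset.filter (fun p : Finset α × Finset α => ¬ k ∈ p.1) _)]
  congr 1
  · -- k ∈ B part
    rw [cntP]
    refine Finset.card_nbij' (fun p => (p.1, p.2.erase k)) (fun p => (p.1, insert k p.2)) ?hi2 ?hj2 ?li2 ?ri2
    · intro p hm
      obtain ⟨hm1, hkB⟩ := Finset.mem_filter.1 hm
      obtain ⟨hm2, hkA⟩ := Finset.mem_filter.1 hm1
      obtain ⟨hmem, hdisj, hcs, hds⟩ := Finset.mem_filter.1 hm2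
      obtain ⟨hmA, hmB⟩ := Finset.mem_product.1 hmem
      obtain ⟨hAu, hA⟩ := Finset.mem_powersetCard.1 hmA
      obtain ⟨hBu, hB⟩ := Finset.mem_powersetCard.1 hmB
      have hsum : d - v k ≤ ∑ i ∈ p.2.erase k, v i := by
        have := Finset.sum_erase_add p.2 v hkB
        linarith
      exact Finset.mem_filter.2 ⟨Finset.mem_product.2 ⟨Finset.mem_powersetCard.2
        ⟨Finset.subset_erase.2 ⟨hAu, hkA⟩, hA⟩, Finset.mem_powersetCard.2
        ⟨Finset.erase_subset_erase _ hBu, by rw [Finset.card_erase_of_mem hkB, hB]; omega⟩⟩,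
        Finset.disjoint_of_subset_right (Finset.erase_subset _ _) hdisj, hcs, hsum⟩
    · intro p hm
      obtain ⟨hmem, hdisj, hcs, hds⟩ := Finset.mem_filter.1 hm
      obtain ⟨hmA, hmB⟩ := Finset.mem_product.1 hmem
      obtain ⟨hAu, hA⟩ := Finset.mem_powersetCard.1 hmA
      obtain ⟨hBu, hB⟩ := Finset.mem_powersetCard.1 hmB
      obtain ⟨hAu', hkA⟩ := Finset.subset_erase.1 hAu
      obtain ⟨hBu', hkB⟩ := Finset.subset_erase.1 hBu
      have hdisj' : Disjoint p.1 (insert k p.2) := by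
        rw [Finset.disjoint_right]
        intro y hy
        rcases Finset.mem_insert.1 hy with rfl | hy
        · exact hkA
        · exact Finset.disjoint_right.1 hdisj hy
      have hsum : d ≤ ∑ i ∈ insert k p.2, v i := by
        rw [Finset.sum_insert hkB]; linarith
      exact Finset.mem_filter.2 ⟨Finset.mem_filter.2 ⟨Finset.mem_filter.2
        ⟨Finset.mem_product.2 ⟨Finset.mem_powersetCard.2 ⟨hAu', hA⟩,
          Finset.mem_powersetCard.2 ⟨Finset.insert_subset hk hBu',
            by rw [Finset.card_insert_of_notMem hkB, hB]⟩⟩, hdisj', hcs, hsum⟩, hkA⟩,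
        Finset.mem_insert_self _ _⟩
    · intro p hm
      obtain ⟨-, hkB⟩ := Finset.mem_filter.1 hm
      show (p.1, insert k (p.2.erase k)) = p
      rw [Finset.insert_erase hkB]
    · intro p hm
      obtain ⟨hmem, -⟩ := Finset.mem_filter.1 hm
      obtain ⟨-, hmB⟩ := Finset.mem_product.1 hmem
      obtain ⟨hBu, -⟩ := Finset.mem_powersetCard.1 hmB
      show (p.1, (insert k p.2).erase k) = p
      rw [Finset.erase_insert (Finset.subset_erase.1 hBu).2]
  · -- neither part
    rw [cntP]
    congr 1
    ext ⟨A, B⟩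
    rw [Finset.mem_filter, Finset.mem_filter, Finset.mem_filter, Finset.mem_filter,
      Finset.mem_product, Finset.mem_product, Finset.mem_powersetCard,
      Finset.mem_powersetCard, Finset.mem_powersetCard, Finset.mem_powersetCard,
      Finset.subset_erase, Finset.subset_erase]
    tauto

end HCaux

namespace HCaux2
open HCaux

variable {α : Type*} [DecidableEq α]

/-- Swap (monotone exchange) bound: replacing an element by a dominating one. -/
lemma swap_bound (v : α → ℝ) (u' : Finset α) (w : ℝ) (hw : ∀ j ∈ u', v j ≤ w)
    (a : ℕ) (c : ℝ) :
    (a + 1) * cnt1 v u' (a + 1) c ≤ (u'.card - a) * cnt1 v u' a (c - w) := by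
  classical
  set Sbig := (u'.powersetCard (a+1)).filter (fun A => c ≤ ∑ i ∈ A, v i) with hSbig
  set Ssm := (u'.powersetCard a).filter (fun A => c - w ≤ ∑ i ∈ A, v i) with hSsm
  set T : Finset (Finset α × α) := Sbig.biUnion (fun A => A.image (fun j => (A, j))) with hT
  set T' : Finset (Finset α × α) := Ssm.biUnion (fun A => (u' \ A).image (fun j => (A, j)))
    with hT'
  have hTcard : T.card = (a + 1) * Sbig.card := by
    rw [hT, Finset.card_biUnion]
    · rw [Finset.sum_congr rfl (fun A hA => ?_), Finset.sum_const, smul_eq_mul, mul_comm]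
      rw [Finset.card_image_of_injective _ (fun x y hxy => by simpa using hxy)]
      obtain ⟨hmem, -⟩ := Finset.mem_filter.1 hA
      exact (Finset.mem_powersetCard.1 hmem).2
    · intro A hA A' hA' hne
      rw [Function.onFun, Finset.disjoint_left]
      intro p hp hp'
      obtain ⟨j, -, rfl⟩ := Finset.mem_image.1 hp
      obtain ⟨j', -, hj'⟩ := Finset.mem_image.1 hp'
      exact hne (congrArg Prod.fst hj').symm
  have hT'card : T'.card = (u'.card - a) * Ssm.card := by
    rw [hT', Finset.card_biUnion]
    · rw [Finset.sum_congr rfl (fun A hA => ?_), Finset.sum_const, smul_eq_mul, mul_comm]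
      rw [Finset.card_image_of_injective _ (fun x y hxy => by simpa using hxy)]
      obtain ⟨hmem, -⟩ := Finset.mem_filter.1 hA
      obtain ⟨hsub, hcard⟩ := Finset.mem_powersetCard.1 hmem
      rw [Finset.card_sdiff_of_subset hsub, hcard]
    · intro A hA A' hA' hne
      rw [Function.onFun, Finset.disjoint_left]
      intro p hp hp'
      obtain ⟨j, -, rfl⟩ := Finset.mem_image.1 hp
      obtain ⟨j', -, hj'⟩ := Finset.mem_image.1 hp'
      exact hne (congrArg Prod.fst hj').symm
  have hle : T.card ≤ T'.card := by
    apply Finset.card_le_card_of_injOn (fun p => (p.1.erase p.2, p.2))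
    · intro p hp
      obtain ⟨A, hA, hpA⟩ := Finset.mem_biUnion.1 hp
      obtain ⟨j, hjA, rfl⟩ := Finset.mem_image.1 hpA
      obtain ⟨hmem, hsum⟩ := Finset.mem_filter.1 hA
      obtain ⟨hsub, hcard⟩ := Finset.mem_powersetCard.1 hmem
      have hju : j ∈ u' := hsub hjA
      apply Finset.mem_biUnion.2
      refine ⟨A.erase j, ?_, ?_⟩
      · refine Finset.mem_filter.2 ⟨Finset.mem_powersetCard.2
          ⟨(Finset.erase_subset _ _).trans hsub, by rw [Finset.card_erase_of_mem hjA, hcard]; omega⟩, ?_⟩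
        have hsumerase := Finset.sum_erase_add A v hjA
        have := hw j hju
        linarith
      · exact Finset.mem_image.2 ⟨j, Finset.mem_sdiff.2 ⟨hju, Finset.notMem_erase _ _⟩, rfl⟩
    · intro p hp q hq hpq
      obtain ⟨A, hA, hpA⟩ := Finset.mem_biUnion.1 hp
      obtain ⟨j, hjA, rfl⟩ := Finset.mem_image.1 hpA
      obtain ⟨A', hA', hqA⟩ := Finset.mem_biUnion.1 hq
      obtain ⟨j', hj'A, rfl⟩ := Finset.mem_image.1 hqA
      simp only [Prod.mk.injEq] at hpq ⊢
      obtain ⟨h1, h2⟩ := hpq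
      subst h2
      refine ⟨?_, rfl⟩
      rw [← Finset.insert_erase hjA, ← Finset.insert_erase hj'A, h1]
  rw [← hSbig] at *
  rw [← hSsm] at *
  calc (a + 1) * Sbig.card = T.card := hTcard.symm
    _ ≤ T'.card := hle
    _ = (u'.card - a) * Ssm.card := hT'card

/-- The core negative-correlation inequality, factorial form. -/
theorem core (v : α → ℝ) (u : Finset α) : ∀ (a b : ℕ) (c d : ℝ),
    cntP v u a b c d * (u.card.factorial) * ((u.card - a - b).factorial)
      ≤ cnt1 v u a c * cnt1 v u b d * ((u.card - a).factorial) * ((u.card - b).factorial) := by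
  induction u using Finset.strongInduction with
  | _ u ih =>
  intro a b c d
  match a, b with
  | 0, b =>
    rw [cntP_zero_left, cnt1_zero]
    have h1 : u.card - 0 - b = u.card - b := by omega
    have h2 : u.card - 0 = u.card := by omega
    rw [h1, h2]
  | (a+1), 0 =>
    rw [cntP_symm, cntP_zero_left, cnt1_zero]
    have h1 : u.card - (a+1) - 0 = u.card - (a+1) := by omega
    have h2 : u.card - 0 = u.card := by omega
    rw [h1, h2]
    split_ifs with hc
    · exact le_of_eq (by ring)
    · simp
  | (a+1), (b+1) =>
    by_cases hab : u.card < (a+1) + (b+1)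
    · rw [cntP_eq_zero hab]
      simp
    · push_neg at hab
      obtain ⟨r, hr⟩ := Nat.exists_eq_add_of_le hab
      have hne : u.Nonempty := Finset.card_pos.1 (by omega)
      obtain ⟨k, hk, hmax⟩ := u.exists_max_image v hne
      have hcard' : (u.erase k).card = a + b + r + 1 := by
        rw [Finset.card_erase_of_mem hk]; omega
      have hss := Finset.erase_ssubset hk
      rw [cntP_split v hk, cnt1_split v hk, cnt1_split v hk]
      -- abbreviations
      set u' := u.erase k with hu'
      set pA := cntP v u' a (b+1) (c - v k) d with hpA
      set pB := cntP v u' (a+1) b c (d - v k) with hpB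
      set p0 := cntP v u' (a+1) (b+1) c d with hp0
      set f1 := cnt1 v u' a (c - v k) with hf1
      set f0 := cnt1 v u' (a+1) c with hf0
      set g1 := cnt1 v u' b (d - v k) with hg1
      set g0 := cnt1 v u' (b+1) d with hg0
      -- IH instances
      have IHA := ih u' hss a (b+1) (c - v k) d
      have IHB := ih u' hss (a+1) b c (d - v k)
      have IH0 := ih u' hss (a+1) (b+1) c d
      rw [hcard'] at IHA IHB IH0
      have e1 : a + b + r + 1 - a - (b+1) = r := by omega
      have e2 : a + b + r + 1 - a = b + r + 1 := by omega
      have e3 : a + b + r + 1 - (b+1) = a + r := by omega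
      have e4 : a + b + r + 1 - (a+1) = b + r := by omega
      have e5 : a + b + r + 1 - b = a + r + 1 := by omega
      have e6 : a + b + r + 1 - (a+1) - b = r := by omega
      have e7 : a + b + r + 1 - (a+1) - (b+1) = r - 1 := by omega
      rw [e1, e2, e3] at IHA
      rw [e6, e4, e5] at IHB
      rw [e7, e4, e3] at IH0
      -- IH0 with the r factor
      have hP0 : p0 * (a + b + r + 1).factorial * r.factorial
          ≤ r * (f0 * g0 * (b + r).factorial * (a + r).factorial) := by
        match r with
        | 0 =>
          have : p0 = 0 := cntP_eq_zero (by omega)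
          rw [this]; simp
        | (r'+1) =>
          have e7' : r' + 1 - 1 = r' := by omega
          rw [e7'] at IH0
          calc p0 * (a + b + (r'+1) + 1).factorial * (r'+1).factorial
              = (r'+1) * (p0 * (a + b + (r'+1) + 1).factorial * r'.factorial) := by
                rw [Nat.factorial_succ r']; ring
            _ ≤ (r'+1) * (f0 * g0 * (b + (r'+1)).factorial * (a + (r'+1)).factorial) :=
                Nat.mul_le_mul_left _ IH0
      -- swap bounds
      have S1 : (a+1) * f0 ≤ (b + r + 1) * f1 := by
        have := swap_bound v u' (v k) (fun j hj => hmax j (Finset.mem_of_mem_erase hj)) a c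
        rw [hcard', e2] at this
        exact this
      have S2 : (b+1) * g0 ≤ (a + r + 1) * g1 := by
        have := swap_bound v u' (v k) (fun j hj => hmax j (Finset.mem_of_mem_erase hj)) b d
        rw [hcard', e5] at this
        exact this
      -- the scalar Chebyshev inequality
      have cheb := mul_add_mul_le_mul_add_mul S1 S2
      have scalar : (a+b+r+2) * ((b+r+1) * f1 * g0 + (a+r+1) * f0 * g1 + r * (f0 * g0))
          ≤ (f1 + f0) * (g1 + g0) * (b+r+1) * (a+r+1) := by
        have id1 : (a+b+r+2) * ((b+r+1) * f1 * g0 + (a+r+1) * f0 * g1 + r * (f0 * g0))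
              + (((a+1) * f0) * ((b+1) * g0) + ((b+r+1) * f1) * ((a+r+1) * g1))
            = (f1 + f0) * (g1 + g0) * (b+r+1) * (a+r+1)
              + (((a+1) * f0) * ((a+r+1) * g1) + ((b+r+1) * f1) * ((b+1) * g0)) := by ring
        have h := Nat.add_le_add_left cheb ((a+b+r+2) *
          ((b+r+1) * f1 * g0 + (a+r+1) * f0 * g1 + r * (f0 * g0)))
        rw [id1] at h
        exact Nat.le_of_add_le_add_right h
      -- assemble
      have hm : u.card = a + b + r + 2 := by omega
      rw [hm]
      have e8 : a + b + r + 2 - (a+1) - (b+1) = r := by omega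
      have e9 : a + b + r + 2 - (a+1) = b + r + 1 := by omega
      have e10 : a + b + r + 2 - (b+1) = a + r + 1 := by omega
      rw [e8, e9, e10]
      have hfm : (a + b + r + 2).factorial = (a+b+r+2) * (a + b + r + 1).factorial :=
        Nat.factorial_succ _
      have hfb : (b + r + 1).factorial = (b+r+1) * (b + r).factorial := Nat.factorial_succ _
      have hfa : (a + r + 1).factorial = (a+r+1) * (a + r).factorial := Nat.factorial_succ _
      calc (pA + pB + p0) * (a + b + r + 2).factorial * r.factorial
          = (a+b+r+2) * (pA * (a + b + r + 1).factorial * r.factorial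
              + pB * (a + b + r + 1).factorial * r.factorial
              + p0 * (a + b + r + 1).factorial * r.factorial) := by
            rw [hfm]; ring
        _ ≤ (a+b+r+2) * ((f1 * g0 * (b + r + 1).factorial * (a + r).factorial)
              + (f0 * g1 * (b + r).factorial * (a + r + 1).factorial)
              + r * (f0 * g0 * (b + r).factorial * (a + r).factorial)) := by
            apply Nat.mul_le_mul_left
            exact Nat.add_le_add (Nat.add_le_add IHA IHB) hP0
        _ = ((a+b+r+2) * ((b+r+1) * f1 * g0 + (a+r+1) * f0 * g1 + r * (f0 * g0)))
              * ((b + r).factorial * (a + r).factorial) := by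
            rw [hfb, hfa]; ring
        _ ≤ ((f1 + f0) * (g1 + g0) * (b+r+1) * (a+r+1))
              * ((b + r).factorial * (a + r).factorial) :=
            Nat.mul_le_mul_right _ scalar
        _ = (f1 + f0) * (g1 + g0) * (b + r + 1).factorial * (a + r + 1).factorial := by
            rw [hfb, hfa]; ring

end HCaux2

namespace HCaux3

variable {β : Type*} [Fintype β] [DecidableEq β]


/-- a permutation carrying one finset onto another of the same cardinality. -/
lemma exists_perm_iff (A A' : Finset β) (h : A.card = A'.card) :
    ∃ τ : Equiv.Perm β, ∀ p : β, p ∈ A ↔ τ p ∈ A' := by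
  have h1 : Fintype.card {y // y ∈ A} = Fintype.card {y // y ∈ A'} := by
    simp [Fintype.card_coe, h]
  have h2 : Fintype.card {y // ¬ y ∈ A} = Fintype.card {y // ¬ y ∈ A'} := by
    rw [Fintype.card_subtype_compl, Fintype.card_subtype_compl]
    simp [Fintype.card_coe, h]
  let e := Fintype.equivOfCardEq h1
  let f := Fintype.equivOfCardEq h2
  refine ⟨(Equiv.sumCompl (· ∈ A)).symm.trans ((e.sumCongr f).trans
    (Equiv.sumCompl (· ∈ A'))), fun p => ?_⟩
  by_cases hp : p ∈ A
  · have : (Equiv.sumCompl (· ∈ A)).symm p = Sum.inl ⟨p, hp⟩ := by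
      rw [Equiv.symm_apply_eq, Equiv.sumCompl_apply_inl]
    simp only [Equiv.trans_apply, this, Equiv.sumCongr_apply, Sum.map_inl,
      Equiv.sumCompl_apply_inl]
    exact iff_of_true hp (e ⟨p, hp⟩).2
  · have : (Equiv.sumCompl (· ∈ A)).symm p = Sum.inr ⟨p, hp⟩ := by
      rw [Equiv.symm_apply_eq, Equiv.sumCompl_apply_inr]
    simp only [Equiv.trans_apply, this, Equiv.sumCongr_apply, Sum.map_inr,
      Equiv.sumCompl_apply_inr]
    exact iff_of_false hp (f ⟨p, hp⟩).2

/-- a permutation carrying a disjoint pair of finsets onto another. -/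
lemma exists_perm_iff2 (A B A' B' : Finset β) (hAB : Disjoint A B) (hAB' : Disjoint A' B')
    (hA : A.card = A'.card) (hB : B.card = B'.card) :
    ∃ τ : Equiv.Perm β, (∀ p : β, p ∈ A ↔ τ p ∈ A') ∧ (∀ p : β, p ∈ B ↔ τ p ∈ B') := by
  obtain ⟨τ₁, hτ₁⟩ := exists_perm_iff A A' hA
  set B₁ := B.image τ₁ with hB₁def
  have hB₁A' : Disjoint B₁ A' := by
    rw [Finset.disjoint_left]
    rintro y hy hyA'
    obtain ⟨b, hb, rfl⟩ := Finset.mem_image.1 hy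
    have : b ∈ A := (hτ₁ b).2 hyA'
    exact Finset.disjoint_left.1 hAB this hb
  have hB₁card : B₁.card = B.card := Finset.card_image_of_injective _ τ₁.injective
  -- permutation of the subtype ∉ A' mapping B₁ to B'
  set p : β → Prop := fun y => ¬ y ∈ A' with hp
  have hB₁sub : ∀ y ∈ B₁, p y := fun y hy => Finset.disjoint_left.1 hB₁A' hy
  have hB'sub : ∀ y ∈ B', p y := fun y hy => (Finset.disjoint_right.1 hAB' hy)
  have hcards : (B₁.subtype p).card = (B'.subtype p).card := by
    rw [Finset.card_subtype, Finset.card_subtype, Finset.filter_true_of_mem hB₁sub,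
      Finset.filter_true_of_mem hB'sub, hB₁card, hB]
  obtain ⟨pp, hpp⟩ := exists_perm_iff (β := Subtype p) (B₁.subtype p) (B'.subtype p) hcards
  set τ₂ := Equiv.Perm.ofSubtype pp with hτ₂
  have hfix : ∀ y ∈ A', τ₂ y = y := fun y hy =>
    Equiv.Perm.ofSubtype_apply_of_not_mem pp (not_not_intro hy)
  have hA'iff : ∀ y : β, y ∈ A' ↔ τ₂ y ∈ A' := by
    intro y
    by_cases hy : y ∈ A'
    · rw [hfix y hy]
    · have : τ₂ y = (pp ⟨y, hy⟩ : β) := Equiv.Perm.ofSubtype_apply_of_mem pp hy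
      rw [this]
      exact iff_of_false hy (pp ⟨y, hy⟩).2
  have hBiff : ∀ y : β, y ∈ B₁ ↔ τ₂ y ∈ B' := by
    intro y
    by_cases hy : y ∈ A'
    · rw [hfix y hy]
      exact iff_of_false (Finset.disjoint_right.1 hB₁A' hy)
        (Finset.disjoint_left.1 hAB' hy)
    · have hτ₂y : τ₂ y = (pp ⟨y, hy⟩ : β) := Equiv.Perm.ofSubtype_apply_of_mem pp hy
      rw [hτ₂y]
      have := hpp ⟨y, hy⟩
      rw [Finset.mem_subtype, Finset.mem_subtype] at this
      exact this
  refine ⟨τ₁.trans τ₂, fun q => ?_, fun q => ?_⟩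
  · exact (hτ₁ q).trans (hA'iff (τ₁ q))
  · have : q ∈ B ↔ τ₁ q ∈ B₁ := by
      constructor
      · intro hq; exact Finset.mem_image_of_mem _ hq
      · intro hq
        obtain ⟨b, hb, hbe⟩ := Finset.mem_image.1 hq
        rwa [← τ₁.injective hbe]
    exact this.trans (hBiff (τ₁ q))

lemma image_eq_of_iff (τ : Equiv.Perm β) (A A' : Finset β)
    (h : ∀ p : β, p ∈ A ↔ τ p ∈ A') : A.image τ = A' := by
  ext y
  constructor
  · intro hy
    obtain ⟨a, ha, rfl⟩ := Finset.mem_image.1 hy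
    exact (h a).1 ha
  · intro hy
    refine Finset.mem_image.2 ⟨τ.symm y, ?_, τ.apply_symm_apply y⟩
    exact (h (τ.symm y)).2 (by rwa [τ.apply_symm_apply])

variable (t : ℕ)

/-- the set of positions of block `ι` after permuting by `σ`. -/
def blockSet (ι : Fin t → β) (σ : Equiv.Perm β) : Finset β :=
  Finset.univ.image (fun j => σ (ι j))

lemma blockSet_mem (ι : Fin t → β) (hι : Injective ι) (σ : Equiv.Perm β) :
    blockSet t ι σ ∈ Finset.powersetCard t (Finset.univ : Finset β) := by
  rw [Finset.mem_powersetCard]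
  refine ⟨Finset.subset_univ _, ?_⟩
  have hinj : Injective (fun j => σ (ι j)) := fun a b hab => hι (σ.injective hab)
  rw [blockSet, Finset.card_image_of_injective _ hinj]
  simp

lemma sum_blockSet (x : β → ℝ) (ι : Fin t → β) (hι : Injective ι) (σ : Equiv.Perm β) :
    ∑ p ∈ blockSet t ι σ, x p = ∑ j, x (σ (ι j)) := by
  rw [blockSet, Finset.sum_image]
  intro a _ b _ hab
  exact hι (σ.injective hab)

lemma blockSet_trans (ι : Fin t → β) (σ τ : Equiv.Perm β) :
    blockSet t ι (σ.trans τ) = (blockSet t ι σ).image τ := by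
  rw [blockSet, blockSet, Finset.image_image]
  rfl

/-- fibers of `blockSet` all have the same cardinality. -/
lemma fib1_const (ι : Fin t → β) (A A' : Finset β) (hA : A.card = A'.card) :
    (Finset.univ.filter fun σ : Equiv.Perm β => blockSet t ι σ = A).card
      = (Finset.univ.filter fun σ : Equiv.Perm β => blockSet t ι σ = A').card := by
  obtain ⟨τ, hτ⟩ := exists_perm_iff A A' hA
  have himg := image_eq_of_iff τ A A' hτ
  have himg' : A'.image τ.symm = A := by
    rw [← himg, Finset.image_image]
    simp
  refine Finset.card_nbij' (fun σ => σ.trans τ) (fun σ => σ.trans τ.symm) ?hi ?hj ?li ?ri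
  · intro σ hσ
    rw [Finset.mem_coe, Finset.mem_filter] at *
    refine ⟨Finset.mem_univ _, ?_⟩
    rw [blockSet_trans, hσ.2, himg]
  · intro σ hσ
    rw [Finset.mem_coe, Finset.mem_filter] at *
    refine ⟨Finset.mem_univ _, ?_⟩
    rw [blockSet_trans, hσ.2, himg']
  · intro σ _
    ext y
    simp
  · intro σ _
    ext y
    simp

/-- pair fibers all have the same cardinality. -/
lemma fib2_const (ι₁ ι₂ : Fin t → β) (A B A' B' : Finset β)
    (hAB : Disjoint A B) (hAB' : Disjoint A' B')
    (hA : A.card = A'.card) (hB : B.card = B'.card) :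
    (Finset.univ.filter fun σ : Equiv.Perm β =>
        blockSet t ι₁ σ = A ∧ blockSet t ι₂ σ = B).card
      = (Finset.univ.filter fun σ : Equiv.Perm β =>
        blockSet t ι₁ σ = A' ∧ blockSet t ι₂ σ = B').card := by
  obtain ⟨τ, hτ1, hτ2⟩ := exists_perm_iff2 A B A' B' hAB hAB' hA hB
  have himg1 := image_eq_of_iff τ A A' hτ1
  have himg2 := image_eq_of_iff τ B B' hτ2
  have hsymm1 : ∀ p : β, p ∈ A' ↔ τ.symm p ∈ A := by
    intro q
    rw [hτ1 (τ.symm q), τ.apply_symm_apply]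
  have hsymm2 : ∀ p : β, p ∈ B' ↔ τ.symm p ∈ B := by
    intro q
    rw [hτ2 (τ.symm q), τ.apply_symm_apply]
  have himg1' : A'.image τ.symm = A := by
    ext y; constructor
    · intro hy; obtain ⟨a, ha, rfl⟩ := Finset.mem_image.1 hy; exact (hsymm1 a).1 ha
    · intro hy
      exact Finset.mem_image.2 ⟨τ y, (hτ1 y).1 hy, τ.symm_apply_apply y⟩
  have himg2' : B'.image τ.symm = B := by
    ext y; constructor
    · intro hy; obtain ⟨a, ha, rfl⟩ := Finset.mem_image.1 hy; exact (hsymm2 a).1 ha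
    · intro hy
      exact Finset.mem_image.2 ⟨τ y, (hτ2 y).1 hy, τ.symm_apply_apply y⟩
  refine Finset.card_nbij' (fun σ => σ.trans τ) (fun σ => σ.trans τ.symm) ?hi ?hj ?li ?ri
  · intro σ hσ
    rw [Finset.mem_coe, Finset.mem_filter] at *
    exact ⟨Finset.mem_univ _, by rw [blockSet_trans, hσ.2.1, himg1],
      by rw [blockSet_trans, hσ.2.2, himg2]⟩
  · intro σ hσ
    rw [Finset.mem_coe, Finset.mem_filter] at *
    exact ⟨Finset.mem_univ _, by rw [blockSet_trans, hσ.2.1, himg1'],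
      by rw [blockSet_trans, hσ.2.2, himg2']⟩
  · intro σ _
    ext y
    simp
  · intro σ _
    ext y
    simp

end HCaux3

namespace HCaux4
open HCaux HCaux2 HCaux3

variable {β : Type*} [Fintype β] [DecidableEq β]

/-- total count: permutations fibered over the block set. -/
lemma total_fib1 (t : ℕ) (ι : Fin t → β) (hι : Injective ι) (A₀ : Finset β)
    (hA₀ : A₀ ∈ Finset.powersetCard t (Finset.univ : Finset β)) :
    (Fintype.card β).factorial
      = ((Fintype.card β).choose t)
        * (Finset.univ.filter fun σ : Equiv.Perm β => blockSet t ι σ = A₀).card := by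
  have h := Finset.card_eq_sum_card_fiberwise
    (f := fun σ : Equiv.Perm β => blockSet t ι σ)
    (s := Finset.univ) (t := Finset.powersetCard t (Finset.univ : Finset β))
    (fun σ _ => blockSet_mem t ι hι σ)
  rw [Finset.card_univ, Fintype.card_perm] at h
  rw [h]
  rw [Finset.sum_congr rfl (fun A hA => fib1_const t ι A A₀
    (by rw [(Finset.mem_powersetCard.1 hA).2, (Finset.mem_powersetCard.1 hA₀).2]))]
  rw [Finset.sum_const, smul_eq_mul, Finset.card_powersetCard, Finset.card_univ]

/-- filtered count: permutations whose block sum passes a threshold. -/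
lemma filtered_fib1 (x : β → ℝ) (t : ℕ) (ι : Fin t → β) (hι : Injective ι) (c : ℝ)
    (A₀ : Finset β) (hA₀ : A₀ ∈ Finset.powersetCard t (Finset.univ : Finset β)) :
    (Finset.univ.filter fun σ : Equiv.Perm β => c ≤ ∑ j, x (σ (ι j))).card
      = cnt1 x (Finset.univ : Finset β) t c
        * (Finset.univ.filter fun σ : Equiv.Perm β => blockSet t ι σ = A₀).card := by
  have hmem : ∀ σ ∈ (Finset.univ.filter fun σ : Equiv.Perm β => c ≤ ∑ j, x (σ (ι j))),
      blockSet t ι σ ∈ (Finset.powersetCard t (Finset.univ : Finset β)).filter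
        (fun A => c ≤ ∑ i ∈ A, x i) := by
    intro σ hσ
    rw [Finset.mem_filter] at hσ ⊢
    exact ⟨blockSet_mem t ι hι σ, by rw [sum_blockSet t x ι hι σ]; exact hσ.2⟩
  have h := Finset.card_eq_sum_card_fiberwise hmem
  rw [h]
  have hfib : ∀ A ∈ (Finset.powersetCard t (Finset.univ : Finset β)).filter
      (fun A => c ≤ ∑ i ∈ A, x i),
      ((Finset.univ.filter fun σ : Equiv.Perm β => c ≤ ∑ j, x (σ (ι j))).filter
        (fun σ => blockSet t ι σ = A)).card
      = (Finset.univ.filter fun σ : Equiv.Perm β => blockSet t ι σ = A₀).card := by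
    intro A hA
    rw [Finset.mem_filter] at hA
    have : (Finset.univ.filter fun σ : Equiv.Perm β => c ≤ ∑ j, x (σ (ι j))).filter
        (fun σ => blockSet t ι σ = A)
        = Finset.univ.filter (fun σ : Equiv.Perm β => blockSet t ι σ = A) := by
      ext σ
      simp only [Finset.mem_filter, Finset.mem_univ, true_and]
      constructor
      · rintro ⟨-, h2⟩; exact h2
      · intro h2
        refine ⟨?_, h2⟩
        rw [← sum_blockSet t x ι hι σ, h2]
        exact hA.2
    rw [this]
    exact fib1_const t ι A A₀
      (by rw [(Finset.mem_powersetCard.1 hA.1).2, (Finset.mem_powersetCard.1 hA₀).2])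
  rw [Finset.sum_congr rfl hfib, Finset.sum_const, smul_eq_mul, cnt1]

/-- count of disjoint pairs of `t`-sets. -/
lemma card_pairs (t : ℕ) :
    (((Finset.powersetCard t (Finset.univ : Finset β))
        ×ˢ (Finset.powersetCard t (Finset.univ : Finset β))).filter
      fun p => Disjoint p.1 p.2).card
    = ((Fintype.card β).choose t) * (((Fintype.card β) - t).choose t) := by
  have hmem : ∀ p ∈ (((Finset.powersetCard t (Finset.univ : Finset β))
        ×ˢ (Finset.powersetCard t (Finset.univ : Finset β))).filter
      fun p => Disjoint p.1 p.2), p.1 ∈ Finset.powersetCard t (Finset.univ : Finset β) := by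
    intro p hp
    rw [Finset.mem_filter, Finset.mem_product] at hp
    exact hp.1.1
  rw [Finset.card_eq_sum_card_fiberwise hmem]
  have hfib : ∀ A ∈ Finset.powersetCard t (Finset.univ : Finset β),
      ((((Finset.powersetCard t (Finset.univ : Finset β))
        ×ˢ (Finset.powersetCard t (Finset.univ : Finset β))).filter
          fun p => Disjoint p.1 p.2).filter (fun p => p.1 = A)).card
      = ((Fintype.card β) - t).choose t := by
    intro A hA
    obtain ⟨hAsub, hAcard⟩ := Finset.mem_powersetCard.1 hA
    have : ((((Finset.powersetCard t (Finset.univ : Finset β))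
        ×ˢ (Finset.powersetCard t (Finset.univ : Finset β))).filter
          fun p => Disjoint p.1 p.2).filter (fun p => p.1 = A)).card
        = (Finset.powersetCard t ((Finset.univ : Finset β) \ A)).card := by
      refine Finset.card_nbij' (fun p => p.2) (fun B => (A, B)) ?hi ?hj ?li ?ri
      · intro p hp
        rw [Finset.mem_coe, Finset.mem_filter, Finset.mem_filter, Finset.mem_product] at hp
        obtain ⟨⟨⟨h1, h2⟩, hdisj⟩, hfst⟩ := hp
        rw [Finset.mem_powersetCard] at h2; rw [Finset.mem_coe, Finset.mem_powersetCard]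
        refine ⟨Finset.subset_sdiff.2 ⟨h2.1, ?_⟩, h2.2⟩
        rw [← hfst]
        exact hdisj.symm
      · intro B hB
        rw [Finset.mem_coe, Finset.mem_powersetCard, Finset.subset_sdiff] at hB
        rw [Finset.mem_coe, Finset.mem_filter, Finset.mem_filter, Finset.mem_product]
        refine ⟨⟨⟨hA, Finset.mem_powersetCard.2 ⟨hB.1.1, hB.2⟩⟩, hB.1.2.symm⟩, rfl⟩
      · intro p hp
        rw [Finset.mem_coe, Finset.mem_filter] at hp
        rw [← hp.2]
      · intro B hB
        rfl
    rw [this, Finset.card_powersetCard, Finset.card_sdiff_of_subset hAsub, Finset.card_univ, hAcard]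
  rw [Finset.sum_congr rfl hfib, Finset.sum_const, smul_eq_mul,
    Finset.card_powersetCard, Finset.card_univ]

end HCaux4

namespace HCaux5
open HCaux HCaux2 HCaux3 HCaux4

variable {β : Type*} [Fintype β] [DecidableEq β]

lemma blockSet_disjoint (t : ℕ) (ι₁ ι₂ : Fin t → β) (hd : ∀ j j', ι₁ j ≠ ι₂ j')
    (σ : Equiv.Perm β) : Disjoint (blockSet t ι₁ σ) (blockSet t ι₂ σ) := by
  rw [Finset.disjoint_left]
  intro y hy hy'
  obtain ⟨j, -, rfl⟩ := Finset.mem_image.1 hy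
  obtain ⟨j', -, hj⟩ := Finset.mem_image.1 hy'
  exact hd j j' (σ.injective hj).symm

lemma total_fib2 (t : ℕ) (ι₁ ι₂ : Fin t → β) (h₁ : Injective ι₁) (h₂ : Injective ι₂)
    (hd : ∀ j j', ι₁ j ≠ ι₂ j') (A₀ B₀ : Finset β)
    (hA₀ : A₀ ∈ Finset.powersetCard t (Finset.univ : Finset β))
    (hB₀ : B₀ ∈ Finset.powersetCard t (Finset.univ : Finset β))
    (hd₀ : Disjoint A₀ B₀) :
    (Fintype.card β).factorial
      = (((Fintype.card β).choose t) * (((Fintype.card β) - t).choose t))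
        * (Finset.univ.filter fun σ : Equiv.Perm β =>
            blockSet t ι₁ σ = A₀ ∧ blockSet t ι₂ σ = B₀).card := by
  have hmem : ∀ σ ∈ (Finset.univ : Finset (Equiv.Perm β)),
      (blockSet t ι₁ σ, blockSet t ι₂ σ)
        ∈ ((Finset.powersetCard t (Finset.univ : Finset β))
            ×ˢ (Finset.powersetCard t (Finset.univ : Finset β))).filter
          (fun p => Disjoint p.1 p.2) := by
    intro σ _
    rw [Finset.mem_filter, Finset.mem_product]
    exact ⟨⟨blockSet_mem t ι₁ h₁ σ, blockSet_mem t ι₂ h₂ σ⟩, blockSet_disjoint t ι₁ ι₂ hd σ⟩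
  have h := Finset.card_eq_sum_card_fiberwise hmem
  rw [Finset.card_univ, Fintype.card_perm] at h
  rw [h]
  have hfib : ∀ p ∈ ((Finset.powersetCard t (Finset.univ : Finset β))
            ×ˢ (Finset.powersetCard t (Finset.univ : Finset β))).filter
          (fun p => Disjoint p.1 p.2),
      ((Finset.univ : Finset (Equiv.Perm β)).filter
          (fun σ => (blockSet t ι₁ σ, blockSet t ι₂ σ) = p)).card
      = (Finset.univ.filter fun σ : Equiv.Perm β =>
            blockSet t ι₁ σ = A₀ ∧ blockSet t ι₂ σ = B₀).card := by
    intro p hp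
    rw [Finset.mem_filter, Finset.mem_product] at hp
    have heq : (Finset.univ : Finset (Equiv.Perm β)).filter
          (fun σ => (blockSet t ι₁ σ, blockSet t ι₂ σ) = p)
        = (Finset.univ : Finset (Equiv.Perm β)).filter
          (fun σ => blockSet t ι₁ σ = p.1 ∧ blockSet t ι₂ σ = p.2) := by
      ext σ
      simp [Prod.ext_iff]
    rw [heq]
    exact fib2_const t ι₁ ι₂ p.1 p.2 A₀ B₀ hp.2 hd₀
      (by rw [(Finset.mem_powersetCard.1 hp.1.1).2, (Finset.mem_powersetCard.1 hA₀).2])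
      (by rw [(Finset.mem_powersetCard.1 hp.1.2).2, (Finset.mem_powersetCard.1 hB₀).2])
  rw [Finset.sum_congr rfl hfib, Finset.sum_const, smul_eq_mul, card_pairs]

lemma filtered_fib2 (x : β → ℝ) (t : ℕ) (ι₁ ι₂ : Fin t → β)
    (h₁ : Injective ι₁) (h₂ : Injective ι₂)
    (hd : ∀ j j', ι₁ j ≠ ι₂ j') (c d : ℝ) (A₀ B₀ : Finset β)
    (hA₀ : A₀ ∈ Finset.powersetCard t (Finset.univ : Finset β))
    (hB₀ : B₀ ∈ Finset.powersetCard t (Finset.univ : Finset β))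
    (hd₀ : Disjoint A₀ B₀) :
    (Finset.univ.filter fun σ : Equiv.Perm β =>
        c ≤ ∑ j, x (σ (ι₁ j)) ∧ d ≤ ∑ j, x (σ (ι₂ j))).card
      = cntP x (Finset.univ : Finset β) t t c d
        * (Finset.univ.filter fun σ : Equiv.Perm β =>
            blockSet t ι₁ σ = A₀ ∧ blockSet t ι₂ σ = B₀).card := by
  set P' := ((Finset.powersetCard t (Finset.univ : Finset β))
      ×ˢ (Finset.powersetCard t (Finset.univ : Finset β))).filter
    (fun p => Disjoint p.1 p.2 ∧ c ≤ ∑ i ∈ p.1, x i ∧ d ≤ ∑ i ∈ p.2, x i) with hP'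
  have hmem : ∀ σ ∈ (Finset.univ.filter fun σ : Equiv.Perm β =>
        c ≤ ∑ j, x (σ (ι₁ j)) ∧ d ≤ ∑ j, x (σ (ι₂ j))),
      (blockSet t ι₁ σ, blockSet t ι₂ σ) ∈ P' := by
    intro σ hσ
    rw [Finset.mem_filter] at hσ
    rw [hP', Finset.mem_filter, Finset.mem_product]
    refine ⟨⟨blockSet_mem t ι₁ h₁ σ, blockSet_mem t ι₂ h₂ σ⟩,
      blockSet_disjoint t ι₁ ι₂ hd σ, ?_, ?_⟩
    · rw [sum_blockSet t x ι₁ h₁ σ]; exact hσ.2.1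
    · rw [sum_blockSet t x ι₂ h₂ σ]; exact hσ.2.2
  have h := Finset.card_eq_sum_card_fiberwise hmem
  rw [h]
  have hfib : ∀ p ∈ P',
      ((Finset.univ.filter fun σ : Equiv.Perm β =>
        c ≤ ∑ j, x (σ (ι₁ j)) ∧ d ≤ ∑ j, x (σ (ι₂ j))).filter
          (fun σ => (blockSet t ι₁ σ, blockSet t ι₂ σ) = p)).card
      = (Finset.univ.filter fun σ : Equiv.Perm β =>
            blockSet t ι₁ σ = A₀ ∧ blockSet t ι₂ σ = B₀).card := by
    intro p hp
    rw [hP', Finset.mem_filter, Finset.mem_product] at hp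
    have heq : (Finset.univ.filter fun σ : Equiv.Perm β =>
        c ≤ ∑ j, x (σ (ι₁ j)) ∧ d ≤ ∑ j, x (σ (ι₂ j))).filter
          (fun σ => (blockSet t ι₁ σ, blockSet t ι₂ σ) = p)
        = (Finset.univ : Finset (Equiv.Perm β)).filter
          (fun σ => blockSet t ι₁ σ = p.1 ∧ blockSet t ι₂ σ = p.2) := by
      ext σ
      simp only [Finset.mem_filter, Finset.mem_univ, true_and, Prod.ext_iff]
      constructor
      · rintro ⟨-, h1, h2⟩; exact ⟨h1, h2⟩
      · rintro ⟨h1, h2⟩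
        refine ⟨⟨?_, ?_⟩, h1, h2⟩
        · rw [← sum_blockSet t x ι₁ h₁ σ, h1]; exact hp.2.2.1
        · rw [← sum_blockSet t x ι₂ h₂ σ, h2]; exact hp.2.2.2
    rw [heq]
    exact fib2_const t ι₁ ι₂ p.1 p.2 A₀ B₀ hp.2.1 hd₀
      (by rw [(Finset.mem_powersetCard.1 hp.1.1).2, (Finset.mem_powersetCard.1 hA₀).2])
      (by rw [(Finset.mem_powersetCard.1 hp.1.2).2, (Finset.mem_powersetCard.1 hB₀).2])
  rw [Finset.sum_congr rfl hfib, Finset.sum_const, smul_eq_mul, cntP]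

/-- **Negative correlation of sum-threshold events on disjoint blocks** under a
uniformly random permutation. -/
theorem perm_pair_bound (x : β → ℝ) (t : ℕ) (ι₁ ι₂ : Fin t → β)
    (h₁ : Injective ι₁) (h₂ : Injective ι₂) (hd : ∀ j j', ι₁ j ≠ ι₂ j') (c d : ℝ) :
    (Finset.univ.filter fun σ : Equiv.Perm β =>
        c ≤ ∑ j, x (σ (ι₁ j)) ∧ d ≤ ∑ j, x (σ (ι₂ j))).card
      * (Fintype.card β).factorial
    ≤ (Finset.univ.filter fun σ : Equiv.Perm β => c ≤ ∑ j, x (σ (ι₁ j))).card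
      * (Finset.univ.filter fun σ : Equiv.Perm β => d ≤ ∑ j, x (σ (ι₂ j))).card := by
  set m := Fintype.card β with hm
  have hmt : t ≤ m := by
    have := Fintype.card_le_of_injective ι₁ h₁
    simpa using this
  have h2t : t + t ≤ m := by
    have hinj : Injective (Sum.elim ι₁ ι₂ : Fin t ⊕ Fin t → β) := by
      intro a b hab
      match a, b with
      | Sum.inl a, Sum.inl b => rw [h₁ hab]
      | Sum.inl a, Sum.inr b => exact absurd hab (hd a b)
      | Sum.inr a, Sum.inl b => exact absurd hab.symm (hd b a)
      | Sum.inr a, Sum.inr b => rw [h₂ hab]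
    have := Fintype.card_le_of_injective _ hinj
    simpa using this
  have ht2 : t ≤ m - t := by omega
  -- reference sets
  set A₀ := blockSet t ι₁ 1 with hA₀def
  set B₀ := blockSet t ι₂ 1 with hB₀def
  have hA₀ := blockSet_mem t ι₁ h₁ 1
  have hB₀ := blockSet_mem t ι₂ h₂ 1
  have hd₀ : Disjoint A₀ B₀ := blockSet_disjoint t ι₁ ι₂ hd 1
  -- fiber cardinalities
  set c1 := (Finset.univ.filter fun σ : Equiv.Perm β => blockSet t ι₁ σ = A₀).card with hc1def
  set c1' := (Finset.univ.filter fun σ : Equiv.Perm β => blockSet t ι₂ σ = B₀).card with hc1'def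
  set c2 := (Finset.univ.filter fun σ : Equiv.Perm β =>
      blockSet t ι₁ σ = A₀ ∧ blockSet t ι₂ σ = B₀).card with hc2def
  have E1 : m.factorial = m.choose t * c1 := total_fib1 t ι₁ h₁ A₀ hA₀
  have E1' : m.factorial = m.choose t * c1' := total_fib1 t ι₂ h₂ B₀ hB₀
  have E2 : m.factorial = (m.choose t * ((m - t).choose t)) * c2 :=
    total_fib2 t ι₁ ι₂ h₁ h₂ hd A₀ B₀ hA₀ hB₀ hd₀
  have hchoosepos : 0 < m.choose t := Nat.choose_pos hmt
  have hc11' : c1 = c1' := Nat.eq_of_mul_eq_mul_left hchoosepos (E1.symm.trans E1')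
  have hc1c2 : c1 = ((m - t).choose t) * c2 := by
    apply Nat.eq_of_mul_eq_mul_left hchoosepos
    rw [← E1, E2]; ring
  have K1 : (Finset.univ.filter fun σ : Equiv.Perm β => c ≤ ∑ j, x (σ (ι₁ j))).card
      = cnt1 x (Finset.univ : Finset β) t c * c1 := filtered_fib1 x t ι₁ h₁ c A₀ hA₀
  have K2 : (Finset.univ.filter fun σ : Equiv.Perm β => d ≤ ∑ j, x (σ (ι₂ j))).card
      = cnt1 x (Finset.univ : Finset β) t d * c1' := filtered_fib1 x t ι₂ h₂ d B₀ hB₀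
  have C12 : (Finset.univ.filter fun σ : Equiv.Perm β =>
        c ≤ ∑ j, x (σ (ι₁ j)) ∧ d ≤ ∑ j, x (σ (ι₂ j))).card
      = cntP x (Finset.univ : Finset β) t t c d * c2 :=
    filtered_fib2 x t ι₁ ι₂ h₁ h₂ hd c d A₀ B₀ hA₀ hB₀ hd₀
  -- the core inequality, in binomial-coefficient form
  have core' := HCaux2.core x (Finset.univ : Finset β) t t c d
  rw [Finset.card_univ, ← hm] at core'
  have hid1 : m.choose t * t.factorial * (m - t).factorial = m.factorial :=
    Nat.choose_mul_factorial_mul_factorial hmt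
  have hid2 : (m - t).choose t * t.factorial * (m - t - t).factorial = (m - t).factorial :=
    Nat.choose_mul_factorial_mul_factorial ht2
  have hchoose : cntP x (Finset.univ : Finset β) t t c d * m.choose t
      ≤ cnt1 x (Finset.univ : Finset β) t c * cnt1 x (Finset.univ : Finset β) t d
        * ((m - t).choose t) := by
    have hpos : 0 < t.factorial * (m - t).factorial * (t.factorial * (m - t - t).factorial) := by
      positivity
    refine Nat.le_of_mul_le_mul_right ?_ hpos
    calc cntP x (Finset.univ : Finset β) t t c d * m.choose t
          * (t.factorial * (m - t).factorial * (t.factorial * (m - t - t).factorial))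
        = (cntP x (Finset.univ : Finset β) t t c d * m.factorial * (m - t - t).factorial)
            * t.factorial := by rw [← hid1]; ring
      _ ≤ (cnt1 x (Finset.univ : Finset β) t c * cnt1 x (Finset.univ : Finset β) t d
            * (m - t).factorial * (m - t).factorial) * t.factorial :=
          Nat.mul_le_mul_right _ core'
      _ = cnt1 x (Finset.univ : Finset β) t c * cnt1 x (Finset.univ : Finset β) t d
            * ((m - t).choose t)
            * (t.factorial * (m - t).factorial * (t.factorial * (m - t - t).factorial)) := by
          rw [← hid2]; ring
  -- assembly
  calc (Finset.univ.filter fun σ : Equiv.Perm β =>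
        c ≤ ∑ j, x (σ (ι₁ j)) ∧ d ≤ ∑ j, x (σ (ι₂ j))).card * m.factorial
      = (cntP x (Finset.univ : Finset β) t t c d * m.choose t) * (c1 * c2) := by
        rw [C12, E1]; ring
    _ ≤ (cnt1 x (Finset.univ : Finset β) t c * cnt1 x (Finset.univ : Finset β) t d
          * ((m - t).choose t)) * (c1 * c2) := Nat.mul_le_mul_right _ hchoose
    _ = (cnt1 x (Finset.univ : Finset β) t c * c1)
          * (cnt1 x (Finset.univ : Finset β) t d * (((m - t).choose t) * c2)) := by ring
    _ = (Finset.univ.filter fun σ : Equiv.Perm β => c ≤ ∑ j, x (σ (ι₁ j))).card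
          * (Finset.univ.filter fun σ : Equiv.Perm β => d ≤ ∑ j, x (σ (ι₂ j))).card := by
        rw [K1, K2, ← hc1c2, hc11']

end HCaux5


namespace HCfinal
open HCaux HCaux2 HCaux3 HCaux4 HCaux5

variable (n t : ℕ) (x : Fin n × Fin t → ℝ) (q : ℝ)

lemma arrMean_perm (σ : Equiv.Perm (Fin n × Fin t)) :
    arrMean n t (fun p => x (σ p)) = arrMean n t x := by
  rw [arrMean, arrMean]
  congr 1
  exact Equiv.sum_comp σ x

lemma arrVar_perm (σ : Equiv.Perm (Fin n × Fin t)) :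
    arrVar n t (fun p => x (σ p)) = arrVar n t x := by
  rw [arrVar, arrVar, arrMean_perm]
  congr 1
  exact Equiv.sum_comp σ (fun p => (x p - arrMean n t x) ^ 2)

lemma thr_perm (σ : Equiv.Perm (Fin n × Fin t)) :
    thr n t (fun p => x (σ p)) q = thr n t x q := by
  rw [thr, thr, arrVar_perm]

/-- exceedance event of stream `i` for the permuted array. -/
def cond (i : Fin n) (σ : Equiv.Perm (Fin n × Fin t)) : Prop :=
  streamMean n t (fun p => x (σ p)) i - arrMean n t x ≥ thr n t x q

lemma Nhat_perm (σ : Equiv.Perm (Fin n × Fin t)) :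
    Nhat n t (fun p => x (σ p)) q
      = (Finset.univ.filter fun i : Fin n => cond n t x q i σ).card := by
  rw [Nhat]
  congr 1
  apply Finset.filter_congr
  intro i _
  rw [cond, arrMean_perm, thr_perm]

lemma streamMean_comp (y : Fin n × Fin t → ℝ) (e : Equiv.Perm (Fin n × Fin t))
    (i i' : Fin n) (he : ∀ j, e (i', j) = (i, j)) :
    streamMean n t (fun p => y (e p)) i' = streamMean n t y i := by
  rw [streamMean, streamMean]
  congr 1
  apply Finset.sum_congr rfl
  intro j _
  rw [he j]

lemma Phat_perm (σ : Equiv.Perm (Fin n × Fin t)) :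
    Phat n t (fun p => x (σ p)) q = Phat n t x q := by
  by_cases hn : 0 < n
  · rw [Phat, Phat, dif_pos hn, dif_pos hn]
    congr 1
    rw [Nat.cast_inj]
    refine Finset.card_nbij' (fun σ' => σ'.trans σ) (fun σ' => σ'.trans σ.symm) ?hi ?hj ?li ?ri
    · intro σ' hσ'
      rw [Finset.mem_coe, Finset.mem_filter] at hσ' ⊢
      refine ⟨Finset.mem_univ _, ?_⟩
      obtain ⟨-, h⟩ := hσ'
      rw [arrMean_perm, thr_perm] at h
      have : streamMean n t (fun p => x ((σ'.trans σ) p)) ⟨0, hn⟩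
          = streamMean n t (fun p => x (σ (σ' p))) ⟨0, hn⟩ := rfl
      rw [this]
      exact h
    · intro σ' hσ'
      rw [Finset.mem_coe, Finset.mem_filter] at hσ' ⊢
      refine ⟨Finset.mem_univ _, ?_⟩
      obtain ⟨-, h⟩ := hσ'
      rw [arrMean_perm, thr_perm]
      have : streamMean n t (fun p => x (σ ((σ'.trans σ.symm) p))) ⟨0, hn⟩
          = streamMean n t (fun p => x (σ' p)) ⟨0, hn⟩ := by
        congr 1
        funext p
        simp
      rw [this]
      exact h
    · intro σ' _
      show (σ'.trans σ).trans σ.symm = σ'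
      rw [Equiv.trans_assoc, Equiv.self_trans_symm, Equiv.trans_refl]
    · intro σ' _
      show (σ'.trans σ.symm).trans σ = σ'
      rw [Equiv.trans_assoc, Equiv.symm_trans_self, Equiv.trans_refl]
  · rw [Phat, Phat, dif_neg hn, dif_neg hn]

lemma count_eq (hn : 0 < n) (i : Fin n) :
    (Finset.univ.filter fun σ : Equiv.Perm (Fin n × Fin t) => cond n t x q i σ).card
      = (Finset.univ.filter fun σ : Equiv.Perm (Fin n × Fin t) =>
          cond n t x q ⟨0, hn⟩ σ).card := by
  set e : Equiv.Perm (Fin n × Fin t) :=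
    Equiv.prodCongr (Equiv.swap i ⟨0, hn⟩) (Equiv.refl (Fin t)) with he_def
  have he : ∀ j : Fin t, e (⟨0, hn⟩, j) = (i, j) := by
    intro j
    rw [he_def]
    simp [Equiv.swap_apply_right]
  refine Finset.card_nbij' (fun σ => e.trans σ) (fun σ => e.symm.trans σ) ?hi ?hj ?li ?ri
  · intro σ hσ
    rw [Finset.mem_coe, Finset.mem_filter] at hσ ⊢
    refine ⟨Finset.mem_univ _, ?_⟩
    rw [cond] at hσ ⊢
    have : streamMean n t (fun p => x ((e.trans σ) p)) ⟨0, hn⟩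
        = streamMean n t (fun p => x (σ p)) i :=
      streamMean_comp n t (fun p => x (σ p)) e i ⟨0, hn⟩ he
    rw [this]
    exact hσ.2
  · intro σ hσ
    rw [Finset.mem_coe, Finset.mem_filter] at hσ ⊢
    refine ⟨Finset.mem_univ _, ?_⟩
    rw [cond] at hσ ⊢
    have he' : ∀ j : Fin t, e.symm (i, j) = (⟨0, hn⟩, j) := by
      intro j
      rw [Equiv.symm_apply_eq, he j]
    have : streamMean n t (fun p => x ((e.symm.trans σ) p)) i
        = streamMean n t (fun p => x (σ p)) ⟨0, hn⟩ :=
      streamMean_comp n t (fun p => x (σ p)) e.symm ⟨0, hn⟩ i he'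
    rw [this]
    exact hσ.2
  · intro σ _
    show e.symm.trans (e.trans σ) = σ
    rw [← Equiv.trans_assoc, Equiv.symm_trans_self, Equiv.refl_trans]
  · intro σ _
    show e.trans (e.symm.trans σ) = σ
    rw [← Equiv.trans_assoc, Equiv.self_trans_symm, Equiv.refl_trans]

lemma cond_iff_sum (ht : 0 < t) (i : Fin n) (σ : Equiv.Perm (Fin n × Fin t)) :
    cond n t x q i σ ↔ (thr n t x q + arrMean n t x) * t ≤ ∑ j, x (σ (i, j)) := by
  have htR : (0:ℝ) < t := by exact_mod_cast ht
  rw [cond, streamMean, ge_iff_le, le_sub_iff_add_le, le_div_iff₀ htR]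

lemma pair_bound (ht : 0 < t) (i i' : Fin n) (hii : i ≠ i') :
    (Finset.univ.filter fun σ : Equiv.Perm (Fin n × Fin t) =>
        cond n t x q i σ ∧ cond n t x q i' σ).card * (n * t).factorial
      ≤ (Finset.univ.filter fun σ : Equiv.Perm (Fin n × Fin t) => cond n t x q i σ).card
        * (Finset.univ.filter fun σ : Equiv.Perm (Fin n × Fin t) => cond n t x q i' σ).card := by
  set c₀ := (thr n t x q + arrMean n t x) * t with hc₀
  have h1 : (Finset.univ.filter fun σ : Equiv.Perm (Fin n × Fin t) => cond n t x q i σ)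
      = Finset.univ.filter (fun σ : Equiv.Perm (Fin n × Fin t) =>
          c₀ ≤ ∑ j, x (σ (i, j))) :=
    Finset.filter_congr (fun σ _ => cond_iff_sum n t x q ht i σ)
  have h2 : (Finset.univ.filter fun σ : Equiv.Perm (Fin n × Fin t) => cond n t x q i' σ)
      = Finset.univ.filter (fun σ : Equiv.Perm (Fin n × Fin t) =>
          c₀ ≤ ∑ j, x (σ (i', j))) :=
    Finset.filter_congr (fun σ _ => cond_iff_sum n t x q ht i' σ)
  have h12 : (Finset.univ.filter fun σ : Equiv.Perm (Fin n × Fin t) =>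
        cond n t x q i σ ∧ cond n t x q i' σ)
      = Finset.univ.filter (fun σ : Equiv.Perm (Fin n × Fin t) =>
          c₀ ≤ ∑ j, x (σ (i, j)) ∧ c₀ ≤ ∑ j, x (σ (i', j))) :=
    Finset.filter_congr (fun σ _ =>
      and_congr (cond_iff_sum n t x q ht i σ) (cond_iff_sum n t x q ht i' σ))
  rw [h1, h2, h12]
  have hcard : Fintype.card (Fin n × Fin t) = n * t := by simp
  have := perm_pair_bound x t (fun j => (i, j)) (fun j => (i', j))
    (fun a b hab => by simpa using congrArg Prod.snd hab)
    (fun a b hab => by simpa using congrArg Prod.snd hab)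
    (fun j j' hcontra => hii (congrArg Prod.fst hcontra))
    c₀ c₀
  rwa [hcard] at this

lemma ite_mul_ite (p q' : Prop) :
    (if p then (1:ℕ) else 0) * (if q' then 1 else 0) = if p ∧ q' then 1 else 0 := by
  by_cases hp : p <;> by_cases hq : q' <;> simp [hp, hq]

lemma sum_ite_diag (nn : ℕ) (i : Fin nn) (c₁ c₂ : ℕ) :
    ∑ i' : Fin nn, (if i = i' then c₁ else c₂) = c₁ + (nn - 1) * c₂ := by
  rw [Finset.sum_ite, Finset.sum_const, Finset.sum_const, smul_eq_mul, smul_eq_mul]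
  have h1 : (Finset.univ.filter fun i' : Fin nn => i = i') = {i} := by
    ext i'
    simp [eq_comm]
  have h2 : (Finset.univ.filter fun i' : Fin nn => ¬ i = i').card = nn - 1 := by
    have := Finset.card_filter_add_card_filter_not
      (s := (Finset.univ : Finset (Fin nn))) (p := fun i' => i = i')
    rw [h1] at this
    simp only [Finset.card_singleton, Finset.card_univ, Fintype.card_fin] at this
    omega
  rw [h1, h2, Finset.card_singleton, one_mul]

lemma sum_N (hn : 0 < n) :
    ∑ σ : Equiv.Perm (Fin n × Fin t),
        (Finset.univ.filter fun i : Fin n => cond n t x q i σ).card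
      = n * (Finset.univ.filter fun σ : Equiv.Perm (Fin n × Fin t) =>
          cond n t x q ⟨0, hn⟩ σ).card := by
  have h1 : ∀ σ : Equiv.Perm (Fin n × Fin t),
      (Finset.univ.filter fun i : Fin n => cond n t x q i σ).card
        = ∑ i : Fin n, if cond n t x q i σ then 1 else 0 := fun σ =>
    Finset.card_filter _ _
  rw [Finset.sum_congr rfl (fun σ _ => h1 σ), Finset.sum_comm]
  rw [Finset.sum_congr rfl (fun i (_ : i ∈ Finset.univ) =>
    (Finset.card_filter _ _).symm.trans (count_eq n t x q hn i))]
  rw [Finset.sum_const, Finset.card_univ, Fintype.card_fin, smul_eq_mul]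

lemma sum_N_sq (hn : 0 < n) (ht : 0 < t) :
    (∑ σ : Equiv.Perm (Fin n × Fin t),
        (Finset.univ.filter fun i : Fin n => cond n t x q i σ).card
          * (Finset.univ.filter fun i : Fin n => cond n t x q i σ).card)
        * (n * t).factorial
      ≤ n * (Finset.univ.filter fun σ : Equiv.Perm (Fin n × Fin t) =>
              cond n t x q ⟨0, hn⟩ σ).card * (n * t).factorial
        + n * (n - 1)
          * ((Finset.univ.filter fun σ : Equiv.Perm (Fin n × Fin t) =>
              cond n t x q ⟨0, hn⟩ σ).card
            * (Finset.univ.filter fun σ : Equiv.Perm (Fin n × Fin t) =>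
              cond n t x q ⟨0, hn⟩ σ).card) := by
  set K := (Finset.univ.filter fun σ : Equiv.Perm (Fin n × Fin t) =>
    cond n t x q ⟨0, hn⟩ σ).card with hK
  set F := (n * t).factorial with hF
  have step1 : ∑ σ : Equiv.Perm (Fin n × Fin t),
      (Finset.univ.filter fun i : Fin n => cond n t x q i σ).card
        * (Finset.univ.filter fun i : Fin n => cond n t x q i σ).card
      = ∑ i : Fin n, ∑ i' : Fin n,
          (Finset.univ.filter fun σ : Equiv.Perm (Fin n × Fin t) =>
            cond n t x q i σ ∧ cond n t x q i' σ).card := by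
    have h1 : ∀ σ : Equiv.Perm (Fin n × Fin t),
        (Finset.univ.filter fun i : Fin n => cond n t x q i σ).card
          * (Finset.univ.filter fun i : Fin n => cond n t x q i σ).card
        = ∑ i : Fin n, ∑ i' : Fin n, if cond n t x q i σ ∧ cond n t x q i' σ then 1 else 0 := by
      intro σ
      rw [Finset.card_filter, Finset.sum_mul_sum]
      exact Finset.sum_congr rfl fun i _ => Finset.sum_congr rfl fun i' _ =>
        ite_mul_ite _ _
    rw [Finset.sum_congr rfl (fun σ _ => h1 σ), Finset.sum_comm]
    refine Finset.sum_congr rfl fun i _ => ?_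
    rw [Finset.sum_comm]
    exact Finset.sum_congr rfl fun i' _ => (Finset.card_filter _ _).symm
  rw [step1, Finset.sum_mul]
  have step2 : ∀ i : Fin n, (∑ i' : Fin n,
      (Finset.univ.filter fun σ : Equiv.Perm (Fin n × Fin t) =>
        cond n t x q i σ ∧ cond n t x q i' σ).card) * F
      ≤ K * F + (n - 1) * (K * K) := by
    intro i
    rw [Finset.sum_mul]
    calc ∑ i' : Fin n, (Finset.univ.filter fun σ : Equiv.Perm (Fin n × Fin t) =>
          cond n t x q i σ ∧ cond n t x q i' σ).card * F
        ≤ ∑ i' : Fin n, (if i = i' then K * F else K * K) := by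
          apply Finset.sum_le_sum
          intro i' _
          by_cases hii : i = i'
          · subst hii
            rw [if_pos rfl]
            have heq : (Finset.univ.filter fun σ : Equiv.Perm (Fin n × Fin t) =>
                cond n t x q i σ ∧ cond n t x q i σ)
                = Finset.univ.filter fun σ : Equiv.Perm (Fin n × Fin t) =>
                  cond n t x q i σ := by
              apply Finset.filter_congr
              intro σ _
              exact and_self_iff
            rw [heq, count_eq n t x q hn i]
          · rw [if_neg hii]
            have := pair_bound n t x q ht i i' hii
            rw [count_eq n t x q hn i, count_eq n t x q hn i'] at this
            exact this
      _ = K * F + (n - 1) * (K * K) := sum_ite_diag n i _ _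
  calc ∑ i : Fin n, (∑ i' : Fin n,
        (Finset.univ.filter fun σ : Equiv.Perm (Fin n × Fin t) =>
          cond n t x q i σ ∧ cond n t x q i' σ).card) * F
      ≤ ∑ _i : Fin n, (K * F + (n - 1) * (K * K)) :=
        Finset.sum_le_sum fun i _ => step2 i
    _ = n * (K * F + (n - 1) * (K * K)) := by
        rw [Finset.sum_const, Finset.card_univ, Fintype.card_fin, smul_eq_mul]
    _ = n * K * F + n * (n - 1) * (K * K) := by ring

lemma moment (hn : 0 < n) (ht : 0 < t) :
    ∑ σ : Equiv.Perm (Fin n × Fin t),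
        (((Finset.univ.filter fun i : Fin n => cond n t x q i σ).card : ℝ)
          - n * Phat n t x q) ^ 2
      ≤ (((n * t).factorial : ℕ) : ℝ)
          * (n * Phat n t x q * (1 - Phat n t x q)) := by
  set K := (Finset.univ.filter fun σ : Equiv.Perm (Fin n × Fin t) =>
    cond n t x q ⟨0, hn⟩ σ).card with hK
  set F := (n * t).factorial with hF
  have hPK : Phat n t x q = (K : ℝ) / (F : ℝ) := by
    rw [hK, hF, Phat, dif_pos hn]
    rfl
  have hFpos : 0 < F := by rw [hF]; exact Nat.factorial_pos _
  have hFposR : (0:ℝ) < (F:ℝ) := by exact_mod_cast hFpos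
  have hcard_univ : (Finset.univ : Finset (Equiv.Perm (Fin n × Fin t))).card = F := by
    rw [Finset.card_univ, Fintype.card_perm, hF]
    congr 1
    simp
  have hM1 := sum_N n t x q hn
  have hM2 := sum_N_sq n t x q hn ht
  rw [← hK] at hM1 hM2
  rw [← hF] at hM2
  -- cast sums
  have hsum1 : ∑ σ : Equiv.Perm (Fin n × Fin t),
      (((Finset.univ.filter fun i : Fin n => cond n t x q i σ).card : ℕ) : ℝ)
      = ((n * K : ℕ) : ℝ) := by
    rw [← Nat.cast_sum, hM1]
  have hsum2 : ∑ σ : Equiv.Perm (Fin n × Fin t),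
      (((Finset.univ.filter fun i : Fin n => cond n t x q i σ).card : ℕ) : ℝ) ^ 2
      = ((∑ σ : Equiv.Perm (Fin n × Fin t),
          (Finset.univ.filter fun i : Fin n => cond n t x q i σ).card
            * (Finset.univ.filter fun i : Fin n => cond n t x q i σ).card : ℕ) : ℝ) := by
    rw [Nat.cast_sum]
    apply Finset.sum_congr rfl
    intro σ _
    push_cast
    ring
  set A : ℕ := ∑ σ : Equiv.Perm (Fin n × Fin t),
      (Finset.univ.filter fun i : Fin n => cond n t x q i σ).card
        * (Finset.univ.filter fun i : Fin n => cond n t x q i σ).card with hA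
  have hM2R : (A : ℝ) * F ≤ n * K * F + n * ((n:ℝ) - 1) * (K * K) := by
    have := hM2
    have hcast : ((A * F : ℕ) : ℝ) ≤ ((n * K * F + n * (n - 1) * (K * K) : ℕ) : ℝ) := by
      exact_mod_cast this
    push_cast [Nat.cast_sub (by omega : 1 ≤ n)] at hcast
    convert hcast using 2 <;> push_cast <;> ring
  -- expansion of the square
  have hexp : ∑ σ : Equiv.Perm (Fin n × Fin t),
      (((Finset.univ.filter fun i : Fin n => cond n t x q i σ).card : ℝ)
        - n * Phat n t x q) ^ 2
      = (A : ℝ) - 2 * (n * Phat n t x q) * ((n * K : ℕ) : ℝ)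
        + F * (n * Phat n t x q) ^ 2 := by
    have key : ∀ σ : Equiv.Perm (Fin n × Fin t),
        (((Finset.univ.filter fun i : Fin n => cond n t x q i σ).card : ℝ)
          - n * Phat n t x q) ^ 2
        = ((Finset.univ.filter fun i : Fin n => cond n t x q i σ).card : ℝ) ^ 2
          - 2 * (n * Phat n t x q)
            * ((Finset.univ.filter fun i : Fin n => cond n t x q i σ).card : ℝ)
          + (n * Phat n t x q) ^ 2 := fun σ => by ring
    rw [Finset.sum_congr rfl (fun σ _ => key σ), Finset.sum_add_distrib,
      Finset.sum_sub_distrib, Finset.sum_const, hcard_univ, ← Finset.mul_sum,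
      hsum1, hsum2, nsmul_eq_mul]
  rw [hexp, hPK]
  have hF0 : (F:ℝ) ≠ 0 := ne_of_gt hFposR
  have key2 : ((A:ℝ) - 2 * (n * ((K:ℝ)/F)) * ((n * K : ℕ) : ℝ)
        + F * (n * ((K:ℝ)/F))^2) * F
      ≤ ((F:ℝ) * ((n:ℝ) * ((K:ℝ)/F) * (1 - (K:ℝ)/F))) * F := by
    have e1 : ((A:ℝ) - 2 * (n * ((K:ℝ)/F)) * ((n * K : ℕ) : ℝ)
          + F * (n * ((K:ℝ)/F))^2) * F = (A:ℝ) * F - (n:ℝ)^2 * (K:ℝ)^2 := by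
      push_cast
      field_simp
      ring
    have e2 : ((F:ℝ) * ((n:ℝ) * ((K:ℝ)/F) * (1 - (K:ℝ)/F))) * F
        = (n:ℝ) * K * F - (n:ℝ) * (K:ℝ)^2 := by
      field_simp
    rw [e1, e2]
    nlinarith [hM2R]
  exact le_of_mul_le_mul_right key2 hFposR

lemma per_q (T : ℝ) (hT : 0 < T) :
    ((Finset.univ.filter fun σ : Equiv.Perm (Fin n × Fin t) =>
        T ≤ Vhat n t (fun p => x (σ p)) q).card : ℝ)
      ≤ (((n * t).factorial : ℕ) : ℝ) / T ^ 2 := by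
  set S := Finset.univ.filter fun σ : Equiv.Perm (Fin n × Fin t) =>
    T ≤ Vhat n t (fun p => x (σ p)) q with hSdef
  rcases Finset.eq_empty_or_nonempty S with hS | hS
  · rw [hS]
    simp only [Finset.card_empty, Nat.cast_zero]
    positivity
  · obtain ⟨σ₀, hσ₀⟩ := hS
    rw [hSdef, Finset.mem_filter] at hσ₀
    set P := Phat n t x q with hPdef
    have hVhat : ∀ σ : Equiv.Perm (Fin n × Fin t), Vhat n t (fun p => x (σ p)) q
        = ((Nhat n t (fun p => x (σ p)) q : ℝ) - n * P)
          / Real.sqrt (n * P * (1 - P)) := by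
      intro σ
      rw [Vhat, Phat_perm, hPdef]
    have hd0 : 0 < (n:ℝ) * P * (1 - P) := by
      by_contra hle
      push_neg at hle
      have hz : Real.sqrt ((n:ℝ) * P * (1 - P)) = 0 := Real.sqrt_eq_zero'.2 hle
      have h0 : Vhat n t (fun p => x (σ₀ p)) q = 0 := by
        rw [hVhat, hz, div_zero]
      rw [h0] at hσ₀
      linarith [hσ₀.2]
    have hn : 0 < n := by
      rcases Nat.eq_zero_or_pos n with h0 | h
      · exfalso
        rw [h0] at hd0
        simp at hd0
      · exact h
    have hPnonneg : 0 ≤ P := by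
      rw [hPdef, Phat, dif_pos hn]
      positivity
    have hnR : (0:ℝ) < n := by exact_mod_cast hn
    have hprod : 0 < P * (1 - P) := by
      rcases lt_or_ge 0 (P * (1 - P)) with h | h
      · exact h
      · exfalso
        nlinarith [hd0]
    have hP1 : P < 1 := by nlinarith [hprod, hPnonneg]
    have hPpos : 0 < P := by nlinarith [hprod]
    have ht : 0 < t := by
      by_contra ht0
      push_neg at ht0
      have ht0' : t = 0 := by omega
      subst ht0'
      have hsm : ∀ σ : Equiv.Perm (Fin n × Fin 0), streamMean n 0 (fun p => x (σ p)) ⟨0, hn⟩ = 0 := by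
        intro σ
        rw [streamMean]
        simp
      have hcardall : ((Finset.univ : Finset (Equiv.Perm (Fin n × Fin 0))).card : ℝ)
          = ((n * 0).factorial : ℝ) := by
        rw [Finset.card_univ, Fintype.card_perm]
        congr 2
        simp
      by_cases hC : (0:ℝ) - arrMean n 0 x ≥ thr n 0 x q
      · have hP1' : P = 1 := by
          rw [hPdef, Phat, dif_pos hn]
          rw [Finset.filter_true_of_mem (fun σ _ => by rw [hsm σ]; exact hC)]
          rw [hcardall, div_self (by
            have : 0 < (n * 0).factorial := Nat.factorial_pos _
            exact_mod_cast this.ne')]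
        linarith
      · have hP0' : P = 0 := by
          rw [hPdef, Phat, dif_pos hn]
          rw [Finset.filter_false_of_mem (fun σ _ => by
            intro hcon
            apply hC
            rwa [hsm σ] at hcon)]
          simp
        linarith
    -- pointwise Chebyshev bound on the event
    have hsq : ∀ σ ∈ S, T ^ 2 * ((n:ℝ) * P * (1 - P))
        ≤ (((Finset.univ.filter fun i : Fin n => cond n t x q i σ).card : ℝ) - n * P) ^ 2 := by
      intro σ hσ
      rw [hSdef, Finset.mem_filter] at hσ
      have hv := hσ.2
      rw [hVhat, Nhat_perm] at hv
      have hsqrtpos : 0 < Real.sqrt ((n:ℝ) * P * (1 - P)) := Real.sqrt_pos.2 hd0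
      rw [le_div_iff₀ hsqrtpos] at hv
      have h2 : Real.sqrt ((n:ℝ) * P * (1 - P)) ^ 2 = (n:ℝ) * P * (1 - P) :=
        Real.sq_sqrt hd0.le
      have hTs : 0 ≤ T * Real.sqrt ((n:ℝ) * P * (1 - P)) := by positivity
      have hsq' := mul_self_le_mul_self hTs hv
      nlinarith [hsq', h2]
    have hsum1 : (S.card : ℝ) * (T ^ 2 * ((n:ℝ) * P * (1 - P)))
        ≤ ∑ σ ∈ S, (((Finset.univ.filter fun i : Fin n => cond n t x q i σ).card : ℝ)
            - n * P) ^ 2 := by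
      have := Finset.card_nsmul_le_sum S _ _ hsq
      rwa [nsmul_eq_mul] at this
    have hsum2 : ∑ σ ∈ S, (((Finset.univ.filter fun i : Fin n => cond n t x q i σ).card : ℝ)
            - n * P) ^ 2
        ≤ ∑ σ : Equiv.Perm (Fin n × Fin t),
            (((Finset.univ.filter fun i : Fin n => cond n t x q i σ).card : ℝ)
              - n * P) ^ 2 :=
      Finset.sum_le_sum_of_subset_of_nonneg (Finset.subset_univ S)
        (fun σ _ _ => sq_nonneg _)
    have hmom := moment n t x q hn ht
    rw [← hPdef] at hmom
    have hchain : (S.card : ℝ) * (T ^ 2 * ((n:ℝ) * P * (1 - P)))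
        ≤ (((n * t).factorial : ℕ) : ℝ) * ((n:ℝ) * P * (1 - P)) :=
      le_trans hsum1 (le_trans hsum2 hmom)
    have hT2pos : (0:ℝ) < T ^ 2 := by positivity
    rw [le_div_iff₀ hT2pos]
    nlinarith [hchain, hd0, hT2pos]

end HCfinal


/-- deterministic bound on the permutation p-value of the higher
criticism test.  For a finite grid `Q ⊂ [0,∞)` and `T̂(x) = max_{q∈Q} V̂_q(x) > 0`,
the permutation p-value is at most `|Q|/T̂(x)²`. -/
theorem statement18 (n t : ℕ) (x : Fin n × Fin t → ℝ) (Q : Finset ℝ)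
    (hQ : ∀ q ∈ Q, 0 ≤ q) (hQne : Q.Nonempty) :
    let That : (Fin n × Fin t → ℝ) → ℝ := fun X => ⨆ q : Q, Vhat n t X q.1
    0 < That x →
      ((Finset.univ.filter fun σ : Equiv.Perm (Fin n × Fin t) =>
          That (fun p => x (σ p)) ≥ That x).card : ℝ) / (n * t).factorial
        ≤ (Q.card : ℝ) / (That x) ^ 2 := by
  intro That hT
  classical
  haveI hne : Nonempty {q // q ∈ Q} := ⟨⟨hQne.choose, hQne.choose_spec⟩⟩
  set T := That x with hTdef
  have hsub : (Finset.univ.filter fun σ : Equiv.Perm (Fin n × Fin t) =>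
        That (fun p => x (σ p)) ≥ That x)
      ⊆ Q.biUnion (fun q' => Finset.univ.filter fun σ : Equiv.Perm (Fin n × Fin t) =>
        T ≤ Vhat n t (fun p => x (σ p)) q') := by
    intro σ hσ
    rw [Finset.mem_filter] at hσ
    obtain ⟨qm, hqm⟩ := Finite.exists_max
      (fun q' : {q // q ∈ Q} => Vhat n t (fun p => x (σ p)) q'.1)
    have hle : That (fun p => x (σ p)) ≤ Vhat n t (fun p => x (σ p)) qm.1 := by
      have : (⨆ q' : Q, Vhat n t (fun p => x (σ p)) q'.1)
          ≤ Vhat n t (fun p => x (σ p)) qm.1 := ciSup_le hqm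
      exact this
    rw [Finset.mem_biUnion]
    refine ⟨qm.1, qm.2, Finset.mem_filter.2 ⟨Finset.mem_univ _, ?_⟩⟩
    exact le_trans (le_trans (le_of_eq hTdef) hσ.2) hle
  have hcount : (((Finset.univ.filter fun σ : Equiv.Perm (Fin n × Fin t) =>
        That (fun p => x (σ p)) ≥ That x).card : ℕ) : ℝ)
      ≤ ∑ q' ∈ Q, (((Finset.univ.filter fun σ : Equiv.Perm (Fin n × Fin t) =>
        T ≤ Vhat n t (fun p => x (σ p)) q').card : ℕ) : ℝ) := by
    have h1 := Finset.card_le_card hsub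
    have h2 := Finset.card_biUnion_le (s := Q)
      (t := fun q' => Finset.univ.filter fun σ : Equiv.Perm (Fin n × Fin t) =>
        T ≤ Vhat n t (fun p => x (σ p)) q')
    exact_mod_cast le_trans h1 h2
  have hQsum : ∑ q' ∈ Q, (((Finset.univ.filter fun σ : Equiv.Perm (Fin n × Fin t) =>
        T ≤ Vhat n t (fun p => x (σ p)) q').card : ℕ) : ℝ)
      ≤ (Q.card : ℝ) * ((((n * t).factorial : ℕ) : ℝ) / T ^ 2) := by
    calc ∑ q' ∈ Q, (((Finset.univ.filter fun σ : Equiv.Perm (Fin n × Fin t) =>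
          T ≤ Vhat n t (fun p => x (σ p)) q').card : ℕ) : ℝ)
        ≤ ∑ _q' ∈ Q, (((n * t).factorial : ℕ) : ℝ) / T ^ 2 :=
          Finset.sum_le_sum (fun q' _ => HCfinal.per_q n t x q' T hT)
      _ = (Q.card : ℝ) * ((((n * t).factorial : ℕ) : ℝ) / T ^ 2) := by
          rw [Finset.sum_const, nsmul_eq_mul]
  have hFpos : (0:ℝ) < (((n * t).factorial : ℕ) : ℝ) := by
    exact_mod_cast Nat.factorial_pos (n * t)
  have hT2 : (0:ℝ) < T ^ 2 := by positivity
  rw [div_le_div_iff₀ hFpos hT2]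
  have hfinal := le_trans hcount hQsum
  calc (((Finset.univ.filter fun σ : Equiv.Perm (Fin n × Fin t) =>
        That (fun p => x (σ p)) ≥ That x).card : ℕ) : ℝ) * T ^ 2
      ≤ ((Q.card : ℝ) * ((((n * t).factorial : ℕ) : ℝ) / T ^ 2)) * T ^ 2 :=
        mul_le_mul_of_nonneg_right hfinal (le_of_lt hT2)
    _ = (Q.card : ℝ) * (((n * t).factorial : ℕ) : ℝ) := by
        field_simp
end
end
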